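/- arXiv:2011.11935 — 5 statements merged into one kernel-verified Lean document; each statement's English description precedes it below -/
import Mathlib

section
/- Let G be a k-regular finite simple graph on n vertices whose adjacency matrix has smallest eigenvalue λ_min(G) < 0. Then the independence (stability) number α of G satisfies α ≤ n / (1 + k/(-λ_min(G))). -/
open scoped Classical

/-- The adjacency matrix of a simple graph, over `ℝ`. -/
noncomputable def adjMat {V : Type*} [Fintype V] (G : SimpleGraph V) : Matrix V V ℝ :=
  Matrix.of fun i j => if G.Adj i j then (1 : ℝ) else 0

/-- The smallest (real) eigenvalue of a matrix. -/
noncomputable def matMinEig {V : Type*} [Fintype V] (A : Matrix V V ℝ) : ℝ :=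
  sInf {μ : ℝ | ∃ v : V → ℝ, v ≠ 0 ∧ A.mulVec v = μ • v}

/-- The smallest eigenvalue of a graph. -/
noncomputable def minEig {V : Type*} [Fintype V] (G : SimpleGraph V) : ℝ :=
  matMinEig (adjMat G)

/-- The degree (valency) of a vertex. -/
noncomputable def deg {V : Type*} [Fintype V] (G : SimpleGraph V) (v : V) : ℕ :=
  (G.neighborSet v).ncard

/-! Hoffman's argument: `A - λ_min • 1` is positive semidefinite, so `λ_min ‖w‖² ≤ wᵀ A w`
for every `w`. Take `w = n • 1_S - |S| • 1`, which is orthogonal to the all-ones eigenvector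
(eigenvalue `k`). Independence of `S` kills `1_Sᵀ A 1_S`, leaving `wᵀ A w = -n k |S|²` and
`‖w‖² = n |S| (n - |S|)`; the resulting inequality rearranges to `|S| (k - λ_min) ≤ -λ_min n`. -/

open Matrix

section Spectrum

variable {V : Type*} [Fintype V] [DecidableEq V]

lemma Matrix.setOf_mulVec_eq_smul_eq_spectrum {K : Type*} [Field K] (A : Matrix V V K) :
    {μ : K | ∃ v : V → K, v ≠ 0 ∧ A *ᵥ v = μ • v} = spectrum K A := by
  ext μ
  rw [← spectrum_toLin', ← Module.End.hasEigenvalue_iff_mem_spectrum]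
  constructor
  · rintro ⟨v, hv, hAv⟩
    exact Module.End.hasEigenvalue_of_hasEigenvector
      ⟨Module.End.mem_eigenspace_iff.mpr (by simpa using hAv), hv⟩
  · intro h
    obtain ⟨v, hv⟩ := h.exists_hasEigenvector
    exact ⟨v, hv.2, by simpa using Module.End.mem_eigenspace_iff.mp hv.1⟩

lemma matMinEig_le_of_mem_spectrum {A : Matrix V V ℝ} {μ : ℝ} (hμ : μ ∈ spectrum ℝ A) :
    matMinEig A ≤ μ := by
  rw [matMinEig, setOf_mulVec_eq_smul_eq_spectrum]
  exact csInf_le A.finite_spectrum.bddBelow hμ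

lemma Matrix.IsHermitian.posSemidef_sub_smul_one {A : Matrix V V ℝ} (hA : A.IsHermitian) {c : ℝ}
    (hc : ∀ μ ∈ spectrum ℝ A, c ≤ μ) : (A - c • 1).PosSemidef := by
  rw [posSemidef_iff_isHermitian_and_spectrum_nonneg]
  refine ⟨hA.sub (isHermitian_one.smul (IsSelfAdjoint.all c)), ?_⟩
  rw [← Algebra.algebraMap_eq_smul_one, ← spectrum.sub_singleton_eq]
  rintro _ ⟨μ, hμ, _, rfl, rfl⟩
  simpa using hc μ hμ

lemma Matrix.IsHermitian.matMinEig_mul_dotProduct_self_le {A : Matrix V V ℝ} (hA : A.IsHermitian)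
    (v : V → ℝ) : matMinEig A * (v ⬝ᵥ v) ≤ v ⬝ᵥ A *ᵥ v := by
  have hpsd := hA.posSemidef_sub_smul_one fun _ => matMinEig_le_of_mem_spectrum
  simpa [sub_mulVec, dotProduct_sub, smul_mulVec, dotProduct_smul] using
    hpsd.dotProduct_mulVec_nonneg v

end Spectrum

lemma adjMat_eq_adjMatrix {V : Type*} [Fintype V] (G : SimpleGraph V) :
    adjMat G = G.adjMatrix ℝ :=
  rfl

section Graph

variable {V : Type*} {G : SimpleGraph V} [DecidableRel G.Adj]

lemma SimpleGraph.isHermitian_adjMatrix_real : (G.adjMatrix ℝ).IsHermitian :=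
  G.isSymm_adjMatrix

variable [Fintype V]

lemma isRegularOfDegree_of_deg_eq {k : ℕ} (hreg : ∀ v, deg G v = k) : G.IsRegularOfDegree k :=
  fun v => by
    rw [← hreg v, deg, ← G.card_neighborSet_eq_degree, Set.ncard_eq_toFinset_card',
      Set.toFinset_card]

lemma SimpleGraph.IsRegularOfDegree.adjMatrix_mulVec_one {k : ℕ}
    (hreg : G.IsRegularOfDegree k) : G.adjMatrix ℝ *ᵥ 1 = (k : ℝ) • 1 := by
  ext v
  simpa using adjMatrix_mulVec_const_apply_of_regular (α := ℝ) (a := 1) hreg (v := v)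

lemma SimpleGraph.IsIndepSet.indicator_dotProduct_adjMatrix_mulVec {s : Set V}
    (hs : G.IsIndepSet s) : s.indicator 1 ⬝ᵥ G.adjMatrix ℝ *ᵥ s.indicator 1 = 0 := by
  rw [dotProduct_mulVec_adjMatrix]
  refine Finset.sum_eq_zero fun i _ => Finset.sum_eq_zero fun j _ => ?_
  split_ifs with hij
  · by_cases hi : i ∈ s
    · have hj : j ∉ s := fun hj => hs hi hj hij.ne hij
      simp [hj]
    · simp [hi]
  · rfl

end Graph

open Finset in
theorem SimpleGraph.IsRegularOfDegree.card_mul_le_of_isIndepSet {V : Type*} [Fintype V]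
    [DecidableEq V] {G : SimpleGraph V} [DecidableRel G.Adj] {k : ℕ}
    (hreg : G.IsRegularOfDegree k) {s : Finset V} (hs : G.IsIndepSet s) (hne : s.Nonempty) :
    (#s : ℝ) * (k - matMinEig (G.adjMatrix ℝ)) ≤ -matMinEig (G.adjMatrix ℝ) * Fintype.card V := by
  set A := G.adjMatrix ℝ
  set n : ℝ := (Fintype.card V : ℝ)
  set c : ℝ := (#s : ℝ)
  set x : V → ℝ := (s : Set V).indicator 1
  have hx1 : x ⬝ᵥ 1 = c := by simp [x, c, dotProduct, Set.indicator_apply]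
  have h1x : 1 ⬝ᵥ x = c := by rw [dotProduct_comm, hx1]
  have hxx : x ⬝ᵥ x = c := by simp [x, c, dotProduct, Set.indicator_apply]
  have h11 : (1 : V → ℝ) ⬝ᵥ 1 = n := by simp [n, dotProduct]
  have hA1 : A *ᵥ 1 = (k : ℝ) • 1 := hreg.adjMatrix_mulVec_one
  have h1A : 1 ᵥ* A = (k : ℝ) • 1 := by rw [← mulVec_transpose, G.transpose_adjMatrix, hA1]
  have hxAx : x ⬝ᵥ A *ᵥ x = 0 := hs.indicator_dotProduct_adjMatrix_mulVec
  set w : V → ℝ := n • x - c • 1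
  have hwAw : w ⬝ᵥ A *ᵥ w = -(n * k * c ^ 2) := by
    simp only [w, mulVec_sub, mulVec_smul, hA1, dotProduct_sub, sub_dotProduct, dotProduct_smul,
      smul_dotProduct, dotProduct_mulVec 1, h1A, hxAx, hx1, h1x, h11, smul_eq_mul]
    ring
  have hww : w ⬝ᵥ w = n * c * (n - c) := by
    simp only [w, dotProduct_sub, sub_dotProduct, dotProduct_smul, smul_dotProduct, hxx, hx1, h1x,
      h11, smul_eq_mul]
    ring
  have hnc : 0 < n * c := by
    have hc : 0 < c := by simpa [c] using hne.card_pos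
    have hcn : c ≤ n := by simpa [c, n] using s.card_le_univ
    exact mul_pos (hc.trans_le hcn) hc
  have hrayleigh := G.isHermitian_adjMatrix_real.matMinEig_mul_dotProduct_self_le w
  rw [hwAw, hww] at hrayleigh
  exact le_of_mul_le_mul_left (by linear_combination hrayleigh) hnc

/-- **Hoffman ratio bound.** If `G` is a `k`-regular graph on `n` vertices with
negative smallest eigenvalue, then every independent (stable) set `s` satisfies
`|s| ≤ n / (1 + k / (-λ_min G))`; i.e. the independence number is at most that bound. -/
theorem stmt0 {n : ℕ} (G : SimpleGraph (Fin n)) (k : ℕ)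
    (hreg : ∀ v, deg G v = k) (hmin : minEig G < 0)
    (s : Finset (Fin n)) (hs : ∀ x ∈ s, ∀ y ∈ s, x ≠ y → ¬ G.Adj x y) :
    (s.card : ℝ) ≤ (n : ℝ) / (1 + (k : ℝ) / (-(minEig G))) := by
  have hneg : 0 < -minEig G := neg_pos.mpr hmin
  rcases s.eq_empty_or_nonempty with rfl | hne
  · simp only [Finset.card_empty, Nat.cast_zero]
    positivity
  have hratio := (isRegularOfDegree_of_deg_eq hreg).card_mul_le_of_isIndepSet hs hne
  rw [← adjMat_eq_adjMatrix, Fintype.card_fin] at hratio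
  change _ * (_ - minEig G) ≤ -minEig G * _ at hratio
  rw [le_div_iff₀ (by positivity)]
  calc (s.card : ℝ) * (1 + k / -minEig G) = s.card * (k - minEig G) / -minEig G := by
        field_simp [hmin.ne]
        ring
    _ ≤ n := by
        rw [div_le_iff₀ hneg]
        linarith
end

section
/- (Alon–Boppana) Let k ≥ 3 be an integer. There exists a positive constant C such that for every k-regular finite simple graph G of order n ≥ 2, the second largest eigenvalue λ₁ of the adjacency matrix of G (eigenvalues listed with multiplicity in nonincreasing order, λ₁ being the second entry) satisfies λ₁ ≥ √(k-1)·(1 - C·ln(k-1)/ln(n)). -/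
/-!
If `n > (k+1)^3`, some two vertices `u, v` are at distance at least 4. The vectors
`e_w + k^{-1/2} 1_{N(w)}` for `w = u, v` are orthogonal, the adjacency form vanishes between them,
and each has Rayleigh quotient at least `√k`; some nonzero combination of them is orthogonal to the
top eigenvector, so the second eigenvalue is at least `√k ≥ √(k-1)`.
For `n ≤ (k+1)^3` the constant `C = 3(k+1) log(k+1) / log(k-1)` pushes the right-hand side
below `-k`, a lower bound for every eigenvalue by Gershgorin.
-/

open scoped Classical

lemma adjMat_isHermitian {V : Type*} [Fintype V] (G : SimpleGraph V) :
    (adjMat G).IsHermitian := by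
  unfold Matrix.IsHermitian
  ext i j
  simp only [Matrix.conjTranspose_apply, adjMat, Matrix.of_apply, star_trivial]
  rw [SimpleGraph.adj_comm]


namespace Matrix

lemma dotProduct_mulVec_eq_zero_of_support {m n R : Type*} [Fintype m] [Fintype n]
    [NonUnitalNonAssocSemiring R] {M : Matrix m n R} {f : m → R} {g : n → R}
    (h : ∀ i j, f i ≠ 0 → g j ≠ 0 → M i j = 0) : f ⬝ᵥ M *ᵥ g = 0 := by
  simp only [dotProduct, mulVec, Finset.mul_sum]
  refine Finset.sum_eq_zero fun i _ => Finset.sum_eq_zero fun j _ => ?_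
  by_cases hi : f i = 0
  · simp [hi]
  by_cases hj : g j = 0
  · simp [hj]
  simp [h i j hi hj]

lemma exists_orthogonal_le_dotProduct_mulVec {m R : Type*} [Fintype m] [Field R] [LinearOrder R]
    [IsStrictOrderedRing R] {M : Matrix m m R} {f g : m → R} {r : R}
    (hf : 0 < f ⬝ᵥ f) (hg : 0 < g ⬝ᵥ g) (hfg : f ⬝ᵥ g = 0)
    (hMfg : f ⬝ᵥ M *ᵥ g = 0) (hMgf : g ⬝ᵥ M *ᵥ f = 0)
    (hMf : r * (f ⬝ᵥ f) ≤ f ⬝ᵥ M *ᵥ f) (hMg : r * (g ⬝ᵥ g) ≤ g ⬝ᵥ M *ᵥ g) (w : m → R) :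
    ∃ h : m → R, 0 < h ⬝ᵥ h ∧ w ⬝ᵥ h = 0 ∧ r * (h ⬝ᵥ h) ≤ h ⬝ᵥ M *ᵥ h := by
  by_cases hwf : w ⬝ᵥ f = 0
  · exact ⟨f, hf, hwf, hMf⟩
  refine ⟨(w ⬝ᵥ g) • f - (w ⬝ᵥ f) • g, ?_, ?_, ?_⟩ <;>
    simp only [sub_dotProduct, dotProduct_sub, smul_dotProduct, dotProduct_smul, smul_eq_mul,
      mulVec_sub, mulVec_smul, dotProduct_comm g f, hfg, hMfg, hMgf]
  · have := mul_pos (pow_pos (abs_pos.2 hwf) 2) hg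
    nlinarith [mul_nonneg (sq_nonneg (w ⬝ᵥ g)) hf.le, sq_abs (w ⬝ᵥ f)]
  · ring
  · nlinarith [mul_le_mul_of_nonneg_left hMf (sq_nonneg (w ⬝ᵥ g)),
      mul_le_mul_of_nonneg_left hMg (sq_nonneg (w ⬝ᵥ f))]

namespace IsHermitian

variable {n : Type*} [Fintype n] [DecidableEq n] {A : Matrix n n ℝ} (hA : A.IsHermitian)

lemma dotProduct_self_eq_sum_sq (h : n → ℝ) :
    h ⬝ᵥ h = ∑ i, (⇑(hA.eigenvectorBasis i) ⬝ᵥ h) ^ 2 := by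
  have := hA.eigenvectorBasis.sum_inner_mul_inner (WithLp.toLp 2 h) (WithLp.toLp 2 h)
  simp only [EuclideanSpace.inner_eq_star_dotProduct, star_trivial] at this
  rw [← this]
  exact Finset.sum_congr rfl fun i _ => by rw [sq, dotProduct_comm]

lemma dotProduct_mulVec_self_eq_sum (h : n → ℝ) :
    h ⬝ᵥ A *ᵥ h = ∑ i, hA.eigenvalues i * (⇑(hA.eigenvectorBasis i) ⬝ᵥ h) ^ 2 := by
  have := hA.eigenvectorBasis.sum_inner_mul_inner (WithLp.toLp 2 h) (WithLp.toLp 2 (A *ᵥ h))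
  simp only [EuclideanSpace.inner_eq_star_dotProduct, star_trivial] at this
  rw [dotProduct_comm, ← this]
  refine Finset.sum_congr rfl fun i _ => ?_
  have hAT : Aᵀ = A := by simpa [conjTranspose_eq_transpose_of_trivial] using hA.eq
  rw [dotProduct_comm (A *ᵥ h), dotProduct_mulVec, ← mulVec_transpose, hAT,
    hA.mulVec_eigenvectorBasis, smul_dotProduct, smul_eq_mul]
  ring

lemma dotProduct_mulVec_le_of_eigenvalues_le {t : ℝ} {j₀ : n}
    (ht : ∀ j ≠ j₀, hA.eigenvalues j ≤ t) {h : n → ℝ}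
    (hh : ⇑(hA.eigenvectorBasis j₀) ⬝ᵥ h = 0) :
    h ⬝ᵥ A *ᵥ h ≤ t * (h ⬝ᵥ h) := by
  rw [hA.dotProduct_mulVec_self_eq_sum, hA.dotProduct_self_eq_sum_sq, Finset.mul_sum]
  refine Finset.sum_le_sum fun j _ => ?_
  rcases eq_or_ne j j₀ with rfl | hj
  · simp [hh]
  · exact mul_le_mul_of_nonneg_right (ht j hj) (sq_nonneg _)

lemma hasEigenvalue_eigenvalues (j : n) :
    Module.End.HasEigenvalue (toLin' A) (hA.eigenvalues j) :=
  Module.End.hasEigenvalue_of_hasEigenvector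
    ⟨Module.End.mem_eigenspace_iff.2 (by simpa using hA.mulVec_eigenvectorBasis j),
      (WithLp.ofLp_eq_zero 2).ne.2 (hA.eigenvectorBasis.orthonormal.ne_zero j)⟩

end IsHermitian

end Matrix

namespace SimpleGraph

open Finset Matrix

variable {V : Type*} [Fintype V] [DecidableEq V] (G : SimpleGraph V) [DecidableRel G.Adj] {k : ℕ}

def closedNbhd (s : Finset V) : Finset V :=
  s.biUnion fun x => insert x (G.neighborFinset x)

noncomputable def starVec (c : ℝ) (u : V) : V → ℝ :=
  Pi.single u 1 + c • G.adjMatrix ℝ u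

variable {G}

lemma mem_closedNbhd {s : Finset V} {y : V} :
    y ∈ G.closedNbhd s ↔ ∃ x ∈ s, x = y ∨ G.Adj x y := by
  simp [closedNbhd, eq_comm]

lemma mem_closedNbhd_singleton {u y : V} : y ∈ G.closedNbhd {u} ↔ u = y ∨ G.Adj u y := by
  simp [mem_closedNbhd]

lemma card_closedNbhd_le (hG : G.IsRegularOfDegree k) (s : Finset V) :
    #(G.closedNbhd s) ≤ (k + 1) * #s := by
  calc #(G.closedNbhd s) ≤ ∑ x ∈ s, #(insert x (G.neighborFinset x)) := card_biUnion_le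
    _ ≤ ∑ x ∈ s, (k + 1) := sum_le_sum fun x _ =>
        (card_insert_le _ _).trans (by rw [card_neighborFinset_eq_degree, hG.degree_eq])
    _ = (k + 1) * #s := by rw [sum_const, smul_eq_mul, mul_comm]

lemma card_closedNbhd_iterate_le (hG : G.IsRegularOfDegree k) (m : ℕ) (s : Finset V) :
    #((G.closedNbhd)^[m] s) ≤ (k + 1) ^ m * #s := by
  induction m with
  | zero => simp
  | succ m ih =>
    rw [Function.iterate_succ_apply', pow_succ', mul_assoc]
    exact (card_closedNbhd_le hG _).trans (Nat.mul_le_mul_left _ ih)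

lemma exists_closedNbhd_separated (hG : G.IsRegularOfDegree k)
    (hV : (k + 1) ^ 3 < Fintype.card V) (u : V) :
    ∃ v, ∀ x ∈ G.closedNbhd {u}, ∀ y ∈ G.closedNbhd {v}, x ≠ y ∧ ¬ G.Adj x y := by
  obtain ⟨v, -, hv⟩ : ∃ v ∈ univ, v ∉ (G.closedNbhd)^[3] {u} := by
    apply exists_mem_notMem_of_card_lt_card
    simpa using (card_closedNbhd_iterate_le hG 3 {u}).trans_lt (by simpa using hV)
  refine ⟨v, fun x hx y hy => not_or.1 fun hxy => hv ?_⟩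
  have hvy : y = v ∨ G.Adj y v := (mem_closedNbhd_singleton.1 hy).imp Eq.symm fun h => h.symm
  exact mem_closedNbhd.2 ⟨y, mem_closedNbhd.2 ⟨x, hx, hxy⟩, hvy⟩

lemma mem_closedNbhd_of_starVec_ne_zero {c : ℝ} {u x : V} (hx : G.starVec c u x ≠ 0) :
    x ∈ G.closedNbhd {u} := by
  contrapose! hx
  simp only [mem_closedNbhd_singleton, not_or] at hx
  simp [starVec, Ne.symm hx.1, hx.2]

lemma starVec_dotProduct_mulVec_eq_zero {M : Matrix V V ℝ} {c c' : ℝ} {u v : V}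
    (h : ∀ x ∈ G.closedNbhd {u}, ∀ y ∈ G.closedNbhd {v}, M x y = 0) :
    G.starVec c u ⬝ᵥ M *ᵥ G.starVec c' v = 0 :=
  dotProduct_mulVec_eq_zero_of_support fun x y hx hy =>
    h x (mem_closedNbhd_of_starVec_ne_zero hx) y (mem_closedNbhd_of_starVec_ne_zero hy)

lemma starVec_dotProduct_self (hG : G.IsRegularOfDegree k) (c : ℝ) (u : V) :
    G.starVec c u ⬝ᵥ G.starVec c u = 1 + c ^ 2 * k := by
  simp only [starVec, dotProduct_add, dotProduct_single, Pi.add_apply, Pi.single_eq_same,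
    Pi.smul_apply, adjMatrix_apply, SimpleGraph.irrefl, ↓reduceIte, smul_eq_mul, mul_zero,
    add_zero, mul_one, dotProduct_smul, dotProduct_adjMatrix, mul_ite, add_right_inj]
  rw [sum_congr rfl fun x hx => by
    rw [Pi.single_eq_of_ne (G.ne_of_adj ((mem_neighborFinset ..).1 hx)).symm,
      if_pos ((mem_neighborFinset ..).1 hx)]]
  simp only [zero_add, sum_const, card_neighborFinset_eq_degree, hG.degree_eq, nsmul_eq_mul]
  ring

lemma le_starVec_dotProduct_mulVec (hG : G.IsRegularOfDegree k) {c : ℝ} (hc : 0 ≤ c) (u : V) :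
    2 * c * k ≤ G.starVec c u ⬝ᵥ G.adjMatrix ℝ *ᵥ G.starVec c u := by
  simp only [starVec, mulVec_add, mulVec_single, MulOpposite.op_one, one_smul, dotProduct_add,
    add_dotProduct, single_dotProduct, col_apply, adjMatrix_apply, SimpleGraph.irrefl,
    ↓reduceIte, mul_zero, smul_dotProduct, adjMatrix_dotProduct, sum_boole, smul_eq_mul,
    zero_add, adjMatrix_mulVec_apply, Pi.smul_apply, mul_ite, mul_one, one_mul]
  have h1 : #{x ∈ G.neighborFinset u | G.Adj x u} = k := by
    rw [filter_true_of_mem fun x hx => ((mem_neighborFinset ..).1 hx).symm,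
      card_neighborFinset_eq_degree, hG.degree_eq]
  have h2 : ∑ w ∈ G.neighborFinset u, (if G.Adj u w then c else 0) = k * c := by
    rw [sum_congr rfl fun w hw => if_pos ((mem_neighborFinset ..).1 hw), sum_const,
      card_neighborFinset_eq_degree, hG.degree_eq, nsmul_eq_mul]
  have h3 : 0 ≤ ∑ x ∈ G.neighborFinset u, ∑ w ∈ G.neighborFinset x,
      (if G.Adj u w then c else 0) :=
    sum_nonneg fun _ _ => sum_nonneg fun _ _ => by split_ifs <;> simp [hc]
  rw [h1, h2]
  nlinarith [mul_nonneg hc h3]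

lemma sqrt_mul_starVec_dotProduct_self_le (hG : G.IsRegularOfDegree k) (u : V) :
    √k * (G.starVec (√k)⁻¹ u ⬝ᵥ G.starVec (√k)⁻¹ u)
      ≤ G.starVec (√k)⁻¹ u ⬝ᵥ G.adjMatrix ℝ *ᵥ G.starVec (√k)⁻¹ u := by
  refine le_trans (le_of_eq ?_) (le_starVec_dotProduct_mulVec hG (by positivity) u)
  rw [starVec_dotProduct_self hG]
  rcases k.eq_zero_or_pos with rfl | hk
  · simp
  have hsq : √k ^ 2 = k := Real.sq_sqrt (Nat.cast_nonneg k)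
  have hpos : 0 < √k := Real.sqrt_pos.2 (by exact_mod_cast hk)
  field_simp
  rw [hsq]
  ring

lemma abs_le_of_hasEigenvalue (hG : G.IsRegularOfDegree k) {t : ℝ}
    (ht : Module.End.HasEigenvalue (toLin' (G.adjMatrix ℝ)) t) : |t| ≤ k := by
  obtain ⟨i, hi⟩ := eigenvalue_mem_ball ht
  have hrow : ∑ j ∈ univ.erase i, ‖G.adjMatrix ℝ i j‖ = k := by
    rw [sum_erase _ (by simp), ← hG.degree_eq i, degree, neighborFinset_eq_filter]
    simp [apply_ite]
  rwa [Metric.mem_closedBall, Real.dist_eq, hrow, adjMatrix_apply, if_neg (G.irrefl),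
    sub_zero] at hi

lemma neg_le_eigenvalues (hG : G.IsRegularOfDegree k) (hA : (G.adjMatrix ℝ).IsHermitian)
    (j : V) : -(k : ℝ) ≤ hA.eigenvalues j :=
  (abs_le.1 (abs_le_of_hasEigenvalue hG (hA.hasEigenvalue_eigenvalues j))).1

theorem sqrt_le_of_eigenvalues_le (hG : G.IsRegularOfDegree k)
    (hV : (k + 1) ^ 3 < Fintype.card V) (hA : (G.adjMatrix ℝ).IsHermitian) {t : ℝ} {j₀ : V}
    (ht : ∀ j ≠ j₀, hA.eigenvalues j ≤ t) : √k ≤ t := by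
  obtain ⟨u⟩ : Nonempty V := Fintype.card_pos_iff.1 (by omega)
  obtain ⟨v, huv⟩ := exists_closedNbhd_separated hG hV u
  have hpos : ∀ w, 0 < G.starVec (√k)⁻¹ w ⬝ᵥ G.starVec (√k)⁻¹ w := fun w => by
    rw [starVec_dotProduct_self hG]; positivity
  have horth : G.starVec (√k)⁻¹ u ⬝ᵥ G.starVec (√k)⁻¹ v = 0 := by
    rw [← one_mulVec (G.starVec _ v)]
    exact starVec_dotProduct_mulVec_eq_zero fun x hx y hy => by simp [(huv x hx y hy).1]
  have hAuv : G.starVec (√k)⁻¹ u ⬝ᵥ G.adjMatrix ℝ *ᵥ G.starVec (√k)⁻¹ v = 0 :=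
    starVec_dotProduct_mulVec_eq_zero fun x hx y hy => by simp [(huv x hx y hy).2]
  have hAvu : G.starVec (√k)⁻¹ v ⬝ᵥ G.adjMatrix ℝ *ᵥ G.starVec (√k)⁻¹ u = 0 :=
    starVec_dotProduct_mulVec_eq_zero fun x hx y hy => by
      simp [G.adj_comm x y, (huv y hy x hx).2]
  obtain ⟨h, hh, hj₀, hAh⟩ := exists_orthogonal_le_dotProduct_mulVec (hpos u) (hpos v) horth
    hAuv hAvu (sqrt_mul_starVec_dotProduct_self_le hG u) (sqrt_mul_starVec_dotProduct_self_le hG v)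
    ⇑(hA.eigenvectorBasis j₀)
  exact le_of_mul_le_mul_right (hAh.trans (hA.dotProduct_mulVec_le_of_eigenvalues_le ht hj₀)) hh

end SimpleGraph

lemma deg_eq_degree {V : Type*} [Fintype V] (G : SimpleGraph V) [DecidableRel G.Adj] (v : V) :
    deg G v = G.degree v := by
  rw [deg, ← SimpleGraph.card_neighborSet_eq_degree, Set.ncard_eq_toFinset_card',
    Set.toFinset_card]

section Bounds

open Real

variable {k n : ℕ} {C : ℝ}

lemma sqrt_mul_one_sub_le_sqrt (hk : 2 ≤ k) (hn : 1 ≤ n) (hC : 0 ≤ C) :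
    √(k - 1) * (1 - C * log (k - 1) / log n) ≤ √k := by
  have hk' : (2 : ℝ) ≤ k := by exact_mod_cast hk
  have : 0 ≤ C * log (k - 1) / log n :=
    div_nonneg (mul_nonneg hC (log_nonneg (by linarith))) (log_nonneg (by exact_mod_cast hn))
  calc √(k - 1) * (1 - C * log (k - 1) / log n) ≤ √(k - 1) :=
        mul_le_of_le_one_right (sqrt_nonneg _) (by linarith)
    _ ≤ √k := sqrt_le_sqrt (by linarith)

lemma sqrt_mul_one_sub_le_neg (hk : 3 ≤ k) (hn : 2 ≤ n) (hnk : n ≤ (k + 1) ^ 3)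
    (hC : 3 * (k + 1) * log (k + 1) ≤ C * log (k - 1)) :
    √(k - 1) * (1 - C * log (k - 1) / log n) ≤ -k := by
  have hk' : (3 : ℝ) ≤ k := by exact_mod_cast hk
  have hlogn : 0 < log n := log_pos (by exact_mod_cast hn)
  have hlogn_le : log n ≤ 3 * log (k + 1) := by
    rw [← log_rpow (by positivity)]
    exact log_le_log (by positivity) (by exact_mod_cast hnk)
  have hbound : (k : ℝ) + 1 ≤ C * log (k - 1) / log n := by
    rw [le_div_iff₀ hlogn]
    nlinarith [log_pos (by linarith : (1 : ℝ) < k + 1)]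
  have hsqrt : 1 ≤ √((k : ℝ) - 1) := one_le_sqrt.2 (by linarith)
  nlinarith

end Bounds

/-- **Alon–Boppana.** For each integer `k ≥ 3` there is a positive constant `C` such that
for every `k`-regular graph on `n ≥ 2` vertices, the second entry `μ 1` of the
nonincreasing list `μ` of eigenvalues of the adjacency matrix (with multiplicity)
satisfies `μ 1 ≥ √(k-1) (1 - C ln(k-1)/ln n)`. -/
theorem stmt2 (k : ℕ) (hk : 3 ≤ k) :
    ∃ C : ℝ, 0 < C ∧ ∀ (n : ℕ) (hn : 2 ≤ n) (G : SimpleGraph (Fin n)),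
      (∀ v, deg G v = k) →
      ∀ (μ : Fin n → ℝ) (σ : Equiv.Perm (Fin n)),
        (∀ i, μ i = (adjMat_isHermitian G).eigenvalues (σ i)) →
        Antitone μ →
        Real.sqrt ((k : ℝ) - 1) * (1 - C * Real.log ((k : ℝ) - 1) / Real.log n)
          ≤ μ ⟨1, by omega⟩ := by
  have hk' : (3 : ℝ) ≤ k := by exact_mod_cast hk
  have hlog : 0 < Real.log ((k : ℝ) - 1) := Real.log_pos (by linarith)
  have hlog' : 0 < Real.log ((k : ℝ) + 1) := Real.log_pos (by linarith)
  refine ⟨3 * (k + 1) * Real.log (k + 1) / Real.log (k - 1), by positivity, ?_⟩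
  intro n hn G hdeg μ σ hμ hμ_anti
  have hG : G.IsRegularOfDegree k := fun v => (deg_eq_degree G v).symm.trans (hdeg v)
  by_cases hV : (k + 1) ^ 3 < n
  · have hsecond : ∀ j ≠ σ ⟨0, by omega⟩,
        (adjMat_isHermitian G).eigenvalues j ≤ μ ⟨1, by omega⟩ := by
      intro j hj
      have hj' : (σ.symm j : ℕ) ≠ 0 := fun h =>
        hj (by rw [← (Fin.ext h : σ.symm j = ⟨0, by omega⟩), σ.apply_symm_apply])
      rw [← σ.apply_symm_apply j, ← hμ]
      exact hμ_anti (Fin.le_def.2 (Nat.one_le_iff_ne_zero.2 hj'))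
    exact (sqrt_mul_one_sub_le_sqrt (by omega) (by omega) (by positivity)).trans
      (SimpleGraph.sqrt_le_of_eigenvalues_le hG (by simpa using hV) (adjMat_isHermitian G) hsecond)
  · exact (sqrt_mul_one_sub_le_neg hk hn (not_lt.1 hV) (by rw [div_mul_cancel₀ _ hlog.ne'])).trans
      (hμ _ ▸ SimpleGraph.neg_le_eigenvalues hG (adjMat_isHermitian G) _)
end

section
/- (Hoffman) Let λ be a positive real number. Then there exists a positive integer T = T(λ) such that: if G is a finite simple graph with smallest eigenvalue λ_min(G) ≥ -λ, then G contains neither K_{1,T} nor K̃_{2T} as an induced subgraph. -/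
/-!
Cauchy interlacing for the smallest eigenvalue: a vector supported on an induced subgraph has
the same Rayleigh quotient in the subgraph and in the whole graph, so `λ_min(G) ≤ λ_min(H)`
whenever `H` is an induced subgraph of `G`. It therefore suffices to make `λ_min(K_{1,T})` and
`λ_min(K̃_{2T})` small, which the Rayleigh quotients of explicit test vectors do for `T = k²`:
`(-k, 1, …, 1)` gives `λ_min(K_{1,k²}) ≤ -k`, and the vector that is `1` on the `k²` clique
vertices seen by the extra vertex, `-1` on the other `k²` and `-k` on the extra vertex gives
`λ_min(K̃_{2k²}) ≤ -(2k + 2)/3`.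
-/

open scoped Classical

/-- The star `K_{1,t}`: vertex `0` is the center, adjacent to the `t` pairwise
non-adjacent leaves. -/
def starG (t : ℕ) : SimpleGraph (Fin (t + 1)) :=
  SimpleGraph.fromRel (fun x _ => x = 0)

/-- The graph `K̃_{2t}` on `2t+1` vertices: a clique on the first `2t` vertices,
together with a last vertex adjacent to exactly the first `t` vertices of the clique. -/
def tildeK (t : ℕ) : SimpleGraph (Fin (2 * t + 1)) :=
  SimpleGraph.fromRel
    (fun x y => (x.val < 2 * t ∧ y.val < 2 * t) ∨ (x.val = 2 * t ∧ y.val < t))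

open Function Matrix Unitary

theorem Fin.sum_univ_two_mul_add_one {M : Type*} [AddCommMonoid M] {T : ℕ}
    (g : Fin (2 * T + 1) → M) :
    ∑ a, g a = ∑ i : Fin T, g ⟨i, by omega⟩ + ∑ i : Fin T, g ⟨T + i, by omega⟩ + g (Fin.last _) := by
  rw [Fin.sum_univ_castSucc, ← Fin.sum_congr' _ (two_mul T).symm, Fin.sum_univ_add]
  rfl

namespace Matrix

variable {V : Type*} [Fintype V]

theorem dotProduct_self_pos {x : V → ℝ} (hx : x ≠ 0) : 0 < x ⬝ᵥ x := by
  simpa using dotProduct_star_self_pos_iff.2 hx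

def realEigenvalues (A : Matrix V V ℝ) : Set ℝ :=
  {μ | ∃ v : V → ℝ, v ≠ 0 ∧ A *ᵥ v = μ • v}

theorem matMinEig_eq_sInf (A : Matrix V V ℝ) : matMinEig A = sInf A.realEigenvalues := rfl

namespace IsHermitian

variable {A : Matrix V V ℝ}

theorem eigenvalues_mem_realEigenvalues [DecidableEq V] (hA : A.IsHermitian) (i : V) :
    hA.eigenvalues i ∈ A.realEigenvalues :=
  ⟨hA.eigenvectorBasis i,
    fun h => hA.eigenvectorBasis.orthonormal.ne_zero i (WithLp.ofLp_injective _ h),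
    hA.mulVec_eigenvectorBasis i⟩

theorem posSemidef_sub_smul_one_s9 [DecidableEq V] (hA : A.IsHermitian) {c : ℝ}
    (hc : ∀ i, c ≤ hA.eigenvalues i) : (A - c • 1).PosSemidef := by
  have h : A - c • 1 = conjStarAlgAut ℝ _ hA.eigenvectorUnitary
      (diagonal (hA.eigenvalues - fun _ => c)) := by
    conv_lhs => rw [hA.spectral_theorem]
    rw [Pi.sub_def, ← diagonal_sub, map_sub, ← smul_one_eq_diagonal]
    simp
  rw [h, conjStarAlgAut_apply, Unitary.isUnit_coe.posSemidef_star_right_conjugate_iff]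
  simpa [Pi.le_def] using hc

theorem mul_dotProduct_le_of_le_eigenvalues [DecidableEq V] (hA : A.IsHermitian) {c : ℝ}
    (hc : ∀ i, c ≤ hA.eigenvalues i) (x : V → ℝ) : c * (x ⬝ᵥ x) ≤ x ⬝ᵥ A *ᵥ x := by
  simpa [sub_mulVec, dotProduct_sub, smul_mulVec, dotProduct_smul] using
    (hA.posSemidef_sub_smul_one_s9 hc).dotProduct_mulVec_nonneg x

theorem isLeast_matMinEig [Nonempty V] (hA : A.IsHermitian) :
    IsLeast A.realEigenvalues (matMinEig A) := by
  obtain ⟨i₀, -, hi₀⟩ := Finset.univ.exists_min_image hA.eigenvalues Finset.univ_nonempty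
  suffices h : IsLeast A.realEigenvalues (hA.eigenvalues i₀) by
    rwa [matMinEig_eq_sInf, h.csInf_eq]
  refine ⟨hA.eigenvalues_mem_realEigenvalues i₀, ?_⟩
  rintro μ ⟨v, hv, hAv⟩
  have hle := hA.mul_dotProduct_le_of_le_eigenvalues (fun i => hi₀ i (Finset.mem_univ i)) v
  rw [hAv, dotProduct_smul, smul_eq_mul] at hle
  exact le_of_mul_le_mul_right hle (dotProduct_self_pos hv)

theorem matMinEig_mul_dotProduct_le (hA : A.IsHermitian) (x : V → ℝ) :
    matMinEig A * (x ⬝ᵥ x) ≤ x ⬝ᵥ A *ᵥ x := by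
  cases isEmpty_or_nonempty V
  · simp [dotProduct]
  · exact hA.mul_dotProduct_le_of_le_eigenvalues
      (fun i => hA.isLeast_matMinEig.2 (hA.eigenvalues_mem_realEigenvalues i)) x

end IsHermitian

end Matrix

section ExtendByZero

variable {V W : Type*} [Fintype V] [Fintype W] {f : W → V}

theorem extend_zero_dotProduct (hf : Injective f) (y : W → ℝ) (g : V → ℝ) :
    extend f y 0 ⬝ᵥ g = y ⬝ᵥ (g ∘ f) := by
  refine (Fintype.sum_of_injective f hf _ _ (fun v hv => ?_) fun w => ?_).symm
  · rw [extend_apply' _ _ _ hv, Pi.zero_apply, zero_mul]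
  · rw [hf.extend_apply, Function.comp_apply]

theorem extend_zero_dotProduct_mulVec (hf : Injective f) (M : Matrix V V ℝ) (y : W → ℝ) :
    extend f y 0 ⬝ᵥ M *ᵥ extend f y 0 = y ⬝ᵥ M.submatrix f f *ᵥ y := by
  rw [extend_zero_dotProduct hf]
  congr 1
  ext w
  rw [Function.comp_apply, mulVec, dotProduct_comm, extend_zero_dotProduct hf, dotProduct_comm]
  rfl

end ExtendByZero

namespace SimpleGraph

variable {V W : Type*} [Fintype V] [Fintype W] {G : SimpleGraph V} {H : SimpleGraph W}

theorem adjMat_isHermitian (G : SimpleGraph V) : (adjMat G).IsHermitian := by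
  ext i j
  simp [adjMat, G.adj_comm]

theorem adjMat_submatrix_of_embedding (f : H ↪g G) : (adjMat G).submatrix f f = adjMat H := by
  ext u v
  simp [adjMat]

theorem minEig_mul_dotProduct_le (G : SimpleGraph V) (x : V → ℝ) :
    minEig G * (x ⬝ᵥ x) ≤ x ⬝ᵥ adjMat G *ᵥ x :=
  G.adjMat_isHermitian.matMinEig_mul_dotProduct_le x

theorem minEig_le_div (G : SimpleGraph V) {x : V → ℝ} (hx : 0 < x ⬝ᵥ x) :
    minEig G ≤ x ⬝ᵥ adjMat G *ᵥ x / (x ⬝ᵥ x) :=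
  (le_div_iff₀ hx).2 (G.minEig_mul_dotProduct_le x)

theorem minEig_le_of_embedding [Nonempty W] (f : H ↪g G) : minEig G ≤ minEig H := by
  obtain ⟨y, hy, hHy⟩ := H.adjMat_isHermitian.isLeast_matMinEig.1
  have h := G.minEig_mul_dotProduct_le (extend f y 0)
  rw [extend_zero_dotProduct_mulVec f.injective, adjMat_submatrix_of_embedding, hHy,
    extend_zero_dotProduct f.injective, extend_comp f.injective, dotProduct_smul,
    smul_eq_mul] at h
  exact le_of_mul_le_mul_right h (dotProduct_self_pos hy)

end SimpleGraph

namespace starG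

theorem cons_dotProduct_self (T : ℕ) (s : ℝ) :
    (Fin.cons (-s) 1 : Fin (T + 1) → ℝ) ⬝ᵥ Fin.cons (-s) 1 = s ^ 2 + T := by
  simp [dotProduct, Fin.sum_univ_succ]
  ring

theorem cons_dotProduct_adjMat_mulVec (T : ℕ) (s : ℝ) :
    (Fin.cons (-s) 1 : Fin (T + 1) → ℝ) ⬝ᵥ adjMat (starG T) *ᵥ Fin.cons (-s) 1 = -2 * s * T := by
  simp [dotProduct, mulVec, Fin.sum_univ_succ, adjMat, starG, Fin.succ_ne_zero,
    (Fin.succ_ne_zero _).symm]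
  ring

theorem minEig_sq_le {k : ℕ} (hk : 0 < k) : minEig (starG (k ^ 2)) ≤ -k := by
  have hself := cons_dotProduct_self (k ^ 2) k
  have hpos : 0 < (Fin.cons (-k) 1 : Fin (k ^ 2 + 1) → ℝ) ⬝ᵥ Fin.cons (-k) 1 := by
    rw [hself]
    positivity
  refine ((starG (k ^ 2)).minEig_le_div hpos).trans_eq ?_
  rw [cons_dotProduct_adjMat_mulVec, hself]
  field_simp
  push_cast
  ring

end starG

namespace tildeK

variable (T : ℕ)

def clique : Fin (2 * T + 1) → ℝ := fun a => if (a : ℕ) < 2 * T then 1 else 0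

def half : Fin (2 * T + 1) → ℝ := fun a => if (a : ℕ) < T then 1 else 0

theorem adjMat_eq :
    adjMat (tildeK T) = vecMulVec (clique T) (clique T) - diagonal (clique T)
      + vecMulVec (Pi.single (Fin.last _) 1) (half T)
      + vecMulVec (half T) (Pi.single (Fin.last _) 1) := by
  ext a b
  simp only [adjMat, tildeK, clique, half, of_apply, SimpleGraph.fromRel_adj, Matrix.add_apply,
    Matrix.sub_apply, vecMulVec_apply, diagonal_apply, Pi.single_apply, ne_eq, Fin.ext_iff,
    Fin.val_last]
  split_ifs <;> first | omega | norm_num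

def testVec (s : ℝ) : Fin (2 * T + 1) → ℝ :=
  fun a => if (a : ℕ) < T then 1 else if (a : ℕ) < 2 * T then -1 else -s

theorem testVec_dotProduct_self (s : ℝ) : testVec T s ⬝ᵥ testVec T s = 2 * T + s ^ 2 := by
  have hsecond : ∀ i : Fin T, T + (i : ℕ) < 2 * T := fun i => by omega
  have hlast : ¬ 2 * T < T := by omega
  simp [dotProduct, Fin.sum_univ_two_mul_add_one, testVec, hsecond, hlast]
  ring

theorem testVec_dotProduct_adjMat_mulVec (s : ℝ) :
    testVec T s ⬝ᵥ adjMat (tildeK T) *ᵥ testVec T s = -2 * T - 2 * s * T := by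
  have hfirst : ∀ i : Fin T, (i : ℕ) < 2 * T := fun i => by omega
  have hsecond : ∀ i : Fin T, T + (i : ℕ) < 2 * T := fun i => by omega
  have hlast : ¬ 2 * T < T := by omega
  have hfirst_ne : ∀ i : Fin T, (⟨i, by omega⟩ : Fin (2 * T + 1)) ≠ Fin.last _ :=
    fun i => by simp [Fin.ext_iff]; omega
  have hsecond_ne : ∀ i : Fin T, (⟨T + i, by omega⟩ : Fin (2 * T + 1)) ≠ Fin.last _ :=
    fun i => by simp [Fin.ext_iff]; omega
  rw [adjMat_eq]
  simp [add_mulVec, sub_mulVec, vecMulVec_mulVec, mulVec_diagonal, dotProduct,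
    Fin.sum_univ_two_mul_add_one, testVec, clique, half, Pi.single_apply, hfirst, hsecond, hlast,
    hfirst_ne, hsecond_ne]
  ring

theorem minEig_sq_le {k : ℕ} (hk : 0 < k) : minEig (tildeK (k ^ 2)) ≤ -(2 * k + 2) / 3 := by
  have hself := testVec_dotProduct_self (k ^ 2) k
  have hpos : 0 < testVec (k ^ 2) k ⬝ᵥ testVec (k ^ 2) k := by
    rw [hself]
    positivity
  refine ((tildeK (k ^ 2)).minEig_le_div hpos).trans_eq ?_
  rw [testVec_dotProduct_adjMat_mulVec, hself]
  field_simp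
  push_cast
  ring

end tildeK

/-- **Hoffman.** For every positive real `λ` there is a positive integer `T` such that
every graph with smallest eigenvalue at least `-λ` contains neither `K_{1,T}` nor
`K̃_{2T}` as an induced subgraph. -/
theorem stmt9 (lam : ℝ) (hlam : 0 < lam) :
    ∃ T : ℕ, 0 < T ∧ ∀ (n : ℕ) (G : SimpleGraph (Fin n)),
      -lam ≤ minEig G →
      IsEmpty (starG T ↪g G) ∧ IsEmpty (tildeK T ↪g G) := by
  obtain ⟨k, hk, hk_lam⟩ : ∃ k : ℕ, 0 < k ∧ 2 * lam ≤ k :=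
    ⟨⌈2 * lam⌉₊, Nat.ceil_pos.2 (by positivity), Nat.le_ceil _⟩
  refine ⟨k ^ 2, by positivity, fun n G hG => ⟨⟨fun f => ?_⟩, ⟨fun f => ?_⟩⟩⟩
  · have := (G.minEig_le_of_embedding f).trans (starG.minEig_sq_le hk)
    linarith
  · have := (G.minEig_le_of_embedding f).trans (tildeK.minEig_sq_le hk)
    linarith
end

section
/- (Hoffman) Let t ≥ 3 be an integer. Then there exists a positive constant λ(t) such that: if a finite simple graph G contains neither K_{1,t} nor K̃_{2t} as an induced subgraph, then the smallest eigenvalue of G satisfies λ_min(G) ≥ -λ(t). -/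
/-!
Following Hoffman, write the adjacency matrix as `A = M + E`, where `M = ∑_Q 1_Q 1_Qᵀ` is
positive semidefinite and every row of `E` has absolute sum at most a constant `c(t)`, so that
`xᵀ A x ≥ -c(t) ‖x‖²`. The sets `Q` are quasi-cliques: the quasi-clique of a clique `C` consists
of the vertices with fewer than `t` non-neighbours in `C`, and `Q` ranges over the quasi-cliques
of cliques of size at least a constant `s(t)`. Excluding `K_{1,t}` and `K̃_{2t}`, with Ramsey's
theorem, shows that every vertex of such a `Q` has boundedly many non-neighbours in `Q`, that two
distinct such `Q` meet in boundedly many vertices, that every vertex lies in fewer than `t` of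
them, and that every vertex `u` has boundedly many neighbours `w` with no `Q` containing both.
These four facts bound the row sums of `E`.
-/

open scoped Classical

open Finset Matrix

namespace Hoffman

variable {V : Type*} {G : SimpleGraph V} {t : ℕ}

lemma starG_adj {a b : Fin (t + 1)} : (starG t).Adj a b ↔ a ≠ b ∧ (a = 0 ∨ b = 0) := by
  simp [starG]

lemma tildeK_adj {a b : Fin (2 * t + 1)} :
    (tildeK t).Adj a b ↔ a ≠ b ∧ ((a : ℕ) < 2 * t ∧ (b : ℕ) < 2 * t ∨
      (a : ℕ) = 2 * t ∧ (b : ℕ) < t ∨ (b : ℕ) = 2 * t ∧ (a : ℕ) < t) := by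
  simp only [tildeK, SimpleGraph.fromRel_adj]
  omega

lemma exists_injective_of_card_eq {s : Finset V} {n : ℕ} (hs : #s = n) :
    ∃ f : Fin n → V, Function.Injective f ∧ ∀ i, f i ∈ s :=
  ⟨fun i => (s.equivFinOfCardEq hs).symm i,
    Subtype.val_injective.comp (Equiv.injective _), fun _ => Subtype.property _⟩

lemma nonempty_starG_embedding {c : V} {T : Finset V} (hT : #T = t)
    (hc : ∀ u ∈ T, G.Adj c u) (hind : G.IsIndepSet T) : Nonempty (starG t ↪g G) := by
  obtain ⟨f, hf, hfT⟩ := exists_injective_of_card_eq hT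
  have hcf : c ∉ Set.range f := by
    rintro ⟨i, rfl⟩
    exact G.loopless.irrefl _ (hc _ (hfT i))
  refine ⟨⟨⟨Fin.cons c f, Fin.cons_injective_iff.mpr ⟨hcf, hf⟩⟩, fun {a b} => ?_⟩⟩
  simp only [Function.Embedding.coeFn_mk, starG_adj]
  induction a using Fin.cases <;> induction b using Fin.cases
  · simp
  · simpa [(Fin.succ_ne_zero _).symm] using hc _ (hfT _)
  · simpa using (hc _ (hfT _)).symm
  · simp only [Fin.cons_succ, ne_eq, Fin.succ_ne_zero, or_self, and_false, iff_false]
    intro h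
    exact hind (hfT _) (hfT _) h.ne h

lemma nonempty_tildeK_embedding {v : V} {A B : Finset V} (hA : #A = t) (hB : #B = t)
    (hAB : G.IsClique (↑(A ∪ B) : Set V)) (hvA : ∀ a ∈ A, G.Adj v a)
    (hvB : ∀ b ∈ B, ¬ G.Adj v b) (hvB' : v ∉ B) : Nonempty (tildeK t ↪g G) := by
  obtain ⟨fA, hfA, hfAA⟩ := exists_injective_of_card_eq hA
  obtain ⟨fB, hfB, hfBB⟩ := exists_injective_of_card_eq hB
  have hAB' : ∀ i j, fA i ≠ fB j := fun i j h => hvB _ (hfBB j) (h ▸ hvA _ (hfAA i))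
  set g := Fin.append fA fB
  have hg : Function.Injective g := Fin.append_injective_iff.mpr ⟨hfA, hfB, hAB'⟩
  have hgAB : ∀ k, g k ∈ A ∪ B := by
    refine Fin.addCases (fun i => ?_) (fun i => ?_)
    · simp [g, hfAA]
    · simp only [g, Fin.append_right, mem_union, hfBB, or_true]
  have hvg : ∀ k, G.Adj v (g k) ↔ (k : ℕ) < t := by
    refine Fin.addCases (fun i => ?_) (fun i => ?_)
    · simp [g, hvA _ (hfAA i)]
    · simp only [g, Fin.append_right, hvB _ (hfBB i), false_iff, Fin.val_natAdd]
      omega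
  set f : Fin (2 * t) → V := g ∘ Fin.cast (two_mul t)
  have hf : Function.Injective f := hg.comp (Fin.cast_injective _)
  have hvf : v ∉ Set.range f := by
    rintro ⟨k, hk⟩
    rcases mem_union.mp (hgAB (Fin.cast (two_mul t) k)) with h | h
    · exact G.loopless.irrefl v (hvA _ (hk ▸ h))
    · exact hvB' (hk ▸ h)
  refine ⟨⟨⟨Fin.snoc f v, Fin.snoc_injective_iff.mpr ⟨hf, hvf⟩⟩, fun {a b} => ?_⟩⟩
  simp only [Function.Embedding.coeFn_mk, tildeK_adj]
  induction a using Fin.lastCases <;> induction b using Fin.lastCases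
  · simp
  · simp [f, hvg, (Fin.castSucc_ne_last _).symm]
    omega
  · simp [f, hvg, G.adj_comm, Fin.castSucc_ne_last]
    omega
  · simp only [Fin.snoc_castSucc, Fin.val_castSucc, ne_eq, Fin.castSucc_inj]
    refine ⟨fun h => ⟨fun hij => G.ne_of_adj h (hij ▸ rfl), Or.inl ⟨by omega, by omega⟩⟩, ?_⟩
    rintro ⟨hij, -⟩
    exact hAB (hgAB _) (hgAB _) (hf.ne hij)

def ramseyBound : ℕ → ℕ → ℕ
  | 0, _ => 0
  | _ + 1, 0 => 0
  | a + 1, b + 1 => ramseyBound a (b + 1) + ramseyBound (a + 1) b + 1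

lemma ramseyBound_pos : ∀ {a b : ℕ}, 0 < a → 0 < b → 0 < ramseyBound a b
  | _ + 1, _ + 1, _, _ => by simp [ramseyBound]

lemma exists_isClique_or_isIndepSet (G : SimpleGraph V) :
    ∀ (a b : ℕ) (S : Finset V), ramseyBound a b ≤ #S →
      (∃ T ⊆ S, #T = a ∧ G.IsClique (T : Set V)) ∨ (∃ T ⊆ S, #T = b ∧ G.IsIndepSet (T : Set V))
  | 0, _, _, _ => Or.inl ⟨∅, empty_subset _, card_empty, by simp⟩
  | _ + 1, 0, _, _ => Or.inr ⟨∅, empty_subset _, card_empty, by simp⟩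
  | a + 1, b + 1, S, hS => by
    obtain ⟨v, hv⟩ : S.Nonempty := card_pos.mp (by simp only [ramseyBound] at hS; omega)
    set N := (S.erase v).filter (G.Adj v)
    set M := (S.erase v).filter (¬ G.Adj v ·)
    have hNS : N ⊆ S := (filter_subset _ _).trans (erase_subset _ _)
    have hMS : M ⊆ S := (filter_subset _ _).trans (erase_subset _ _)
    have hNM : #N + #M + 1 = #S := by
      rw [card_filter_add_card_filter_not, card_erase_add_one hv]
    have hvN : v ∉ N := fun h => by simp [N] at h
    have hvM : v ∉ M := fun h => by simp [M] at h
    rcases Nat.lt_or_ge (#N) (ramseyBound a (b + 1)) with hN | hN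
    · rcases exists_isClique_or_isIndepSet G (a + 1) b M
        (by simp only [ramseyBound] at hS; omega) with ⟨T, hTM, hT, hTc⟩ | ⟨T, hTM, hT, hTi⟩
      · exact Or.inl ⟨T, hTM.trans hMS, hT, hTc⟩
      · refine Or.inr ⟨insert v T, insert_subset hv (hTM.trans hMS), ?_, ?_⟩
        · rw [card_insert_of_notMem (fun h => hvM (hTM h)), hT]
        · rw [← G.isClique_compl, coe_insert]
          refine ((G.isClique_compl).2 hTi).insert fun u hu hvu => ?_
          exact ⟨hvu, (mem_filter.mp (hTM hu)).2⟩
    · rcases exists_isClique_or_isIndepSet G a (b + 1) N hN with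
        ⟨T, hTN, hT, hTc⟩ | ⟨T, hTN, hT, hTi⟩
      · refine Or.inl ⟨insert v T, insert_subset hv (hTN.trans hNS), ?_, ?_⟩
        · rw [card_insert_of_notMem (fun h => hvN (hTN h)), hT]
        · rw [coe_insert]
          exact hTc.insert fun u hu _ => (mem_filter.mp (hTN hu)).2
      · exact Or.inr ⟨T, hTN.trans hNS, hT, hTi⟩

lemma isClique_union {s u : Set V} (hs : G.IsClique s) (hu : G.IsClique u)
    (h : ∀ a ∈ s, ∀ b ∈ u, G.Adj a b) : G.IsClique (s ∪ u) :=
  Set.pairwise_union.2 ⟨hs, hu, fun a ha b hb _ => ⟨h a ha b hb, (h a ha b hb).symm⟩⟩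

noncomputable def nbrs (G : SimpleGraph V) (C : Finset V) (v : V) : Finset V := {u ∈ C | G.Adj v u}

noncomputable def nonNbrs (G : SimpleGraph V) (C : Finset V) (v : V) : Finset V :=
  {u ∈ C | u ≠ v ∧ ¬ G.Adj v u}

lemma card_le_card_nbrs_add_card_nonNbrs (C : Finset V) (v : V) :
    #C ≤ #(nbrs G C v) + #(nonNbrs G C v) + 1 := by
  have hC : C ⊆ nbrs G C v ∪ nonNbrs G C v ∪ {v} := fun u hu => by
    by_cases huv : u = v <;> by_cases hvu : G.Adj v u <;> simp [nbrs, nonNbrs, hu, huv, hvu]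
  exact (card_le_card hC).trans <| (card_union_le _ _).trans <|
    add_le_add (card_union_le _ _) (card_singleton v).le

lemma nbrs_mono {C D : Finset V} (h : C ⊆ D) (v : V) : nbrs G C v ⊆ nbrs G D v :=
  filter_subset_filter _ h

lemma nonNbrs_mono {C D : Finset V} (h : C ⊆ D) (v : V) : nonNbrs G C v ⊆ nonNbrs G D v :=
  filter_subset_filter _ h

lemma exists_subset_adj_of_card_nonNbrs_lt {T C : Finset V} {k : ℕ}
    (hT : ∀ u ∈ T, #(nonNbrs G C u) < t) (hk : k + #T * t ≤ #C) :
    ∃ S ⊆ C, #S = k ∧ ∀ c ∈ S, ∀ u ∈ T, G.Adj u c := by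
  set bad := T.biUnion fun u => insert u (nonNbrs G C u)
  have hbad : #bad ≤ #T * t := card_biUnion_le_card_mul _ _ _ fun u hu =>
    (card_insert_le _ _).trans (hT u hu)
  obtain ⟨S, hS, hSk⟩ := exists_subset_card_eq (show k ≤ #(C \ bad) by
    have := card_le_card_sdiff_add_card (s := C) (t := bad); omega)
  refine ⟨S, hS.trans sdiff_subset, hSk, fun c hc u hu => ?_⟩
  obtain ⟨hcC, hcbad⟩ := mem_sdiff.mp (hS hc)
  by_contra hadj
  exact hcbad (mem_biUnion.mpr ⟨u, hu, mem_insert.mpr (by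
    by_cases hcu : c = u
    · exact Or.inl hcu
    · exact Or.inr (mem_filter.mpr ⟨hcC, hcu, hadj⟩))⟩)

noncomputable def privateNbrs (G : SimpleGraph V) (F : Finset (Finset V)) (Q C : Finset V)
    (v : V) : Finset V :=
  {u ∈ C | G.Adj v u ∧ ∀ Q' ∈ F, Q' ≠ Q → u ∉ Q'}

lemma mem_privateNbrs {F : Finset (Finset V)} {Q C : Finset V} {v u : V} :
    u ∈ privateNbrs G F Q C v ↔ u ∈ C ∧ G.Adj v u ∧ ∀ Q' ∈ F, Q' ≠ Q → u ∉ Q' :=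
  mem_filter

lemma privateNbrs_subset (G : SimpleGraph V) (F : Finset (Finset V)) (Q C : Finset V) (v : V) :
    privateNbrs G F Q C v ⊆ C :=
  filter_subset _ _

lemma card_le_card_privateNbrs_add (F : Finset (Finset V)) {Q C : Finset V} (hCQ : C ⊆ Q)
    (v : V) : #C ≤ #(privateNbrs G F Q C v) + (#(nonNbrs G C v) + 1) +
      ∑ Q' ∈ F.erase Q, #(Q' ∩ Q) := by
  have hcover : C ⊆ privateNbrs G F Q C v ∪ insert v (nonNbrs G C v) ∪
      (F.erase Q).biUnion (· ∩ Q) := by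
    intro u hu
    by_cases hpriv : G.Adj v u ∧ ∀ Q' ∈ F, Q' ≠ Q → u ∉ Q'
    · exact mem_union_left _ (mem_union_left _ (mem_privateNbrs.mpr ⟨hu, hpriv⟩))
    rw [not_and_or] at hpriv
    push Not at hpriv
    rcases hpriv with hvu | ⟨Q', hQ', hne, huQ'⟩
    · refine mem_union_left _ (mem_union_right _ ?_)
      by_cases huv : u = v
      · exact huv ▸ mem_insert_self _ _
      · exact mem_insert_of_mem (mem_filter.mpr ⟨hu, huv, hvu⟩)
    · exact mem_union_right _ (mem_biUnion.mpr ⟨Q', mem_erase.mpr ⟨hne, hQ'⟩,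
        mem_inter.mpr ⟨huQ', hCQ hu⟩⟩)
  exact (card_le_card hcover).trans <| (card_union_le _ _).trans <| add_le_add
    ((card_union_le _ _).trans (add_le_add le_rfl (card_insert_le _ _))) card_biUnion_le

lemma exists_isIndepSet_transversal {ι : Type*} [DecidableEq ι] {d : ℕ} (X : ι → Finset V) :
    ∀ I : Finset ι, (I : Set ι).PairwiseDisjoint X →
      (∀ i ∈ I, ∀ j ∈ I, i ≠ j → ∀ z ∈ X j, #(nbrs G (X i) z) ≤ d) →
      (∀ i ∈ I, #I * d < #(X i)) →
      ∃ T ⊆ I.biUnion X, #T = #I ∧ G.IsIndepSet (T : Set V) := by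
  intro I
  induction I using Finset.induction_on with
  | empty => exact fun _ _ _ => ⟨∅, empty_subset _, rfl, by simp⟩
  | @insert i I hiI ih =>
    intro hdisj hnbr hcard
    obtain ⟨T, hTI, hT, hTind⟩ := ih (hdisj.subset (by simp))
      (fun a ha b hb => hnbr a (mem_insert_of_mem ha) b (mem_insert_of_mem hb))
      (fun j hj => lt_of_le_of_lt (Nat.mul_le_mul_right d (card_le_card (subset_insert i I)))
        (hcard j (mem_insert_of_mem hj)))
    have hnbrT : #(T.biUnion (nbrs G (X i))) ≤ #T * d := card_biUnion_le_card_mul _ _ _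
      fun z hz => by
        obtain ⟨j, hj, hzj⟩ := mem_biUnion.mp (hTI hz)
        exact hnbr i (mem_insert_self _ _) j (mem_insert_of_mem hj)
          (ne_of_mem_of_not_mem hj hiI).symm z hzj
    obtain ⟨x, hx⟩ : (X i \ T.biUnion (nbrs G (X i))).Nonempty := by
      rw [← card_pos]
      have := card_le_card_sdiff_add_card (s := X i) (t := T.biUnion (nbrs G (X i)))
      have := hcard i (mem_insert_self _ _)
      rw [card_insert_of_notMem hiI] at this
      nlinarith
    obtain ⟨hxi, hxT⟩ := mem_sdiff.mp hx
    have hxT' : x ∉ T := fun h => by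
      obtain ⟨j, hj, hxj⟩ := mem_biUnion.mp (hTI h)
      exact disjoint_left.mp (hdisj (mem_insert_self _ _) (mem_insert_of_mem hj)
        (ne_of_mem_of_not_mem hj hiI).symm) hxi hxj
    refine ⟨insert x T, insert_subset (mem_biUnion.mpr ⟨i, mem_insert_self _ _, hxi⟩)
      (hTI.trans (biUnion_subset_biUnion_of_subset_left X (subset_insert i I))), ?_, ?_⟩
    · rw [card_insert_of_notMem hxT', card_insert_of_notMem hiI, hT]
    · rw [coe_insert, ← G.isClique_compl]
      refine (G.isClique_compl.2 hTind).insert fun z hz hxz => ⟨hxz, fun hadj => hxT ?_⟩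
      exact mem_biUnion.mpr ⟨z, hz, mem_filter.mpr ⟨hxi, hadj.symm⟩⟩

noncomputable def coverCount (F : Finset (Finset V)) (u w : V) : ℕ := #{Q ∈ F | u ∈ Q ∧ w ∈ Q}

lemma coverCount_eq_card_filter (F : Finset (Finset V)) (u w : V) :
    coverCount F u w = #{Q ∈ {Q ∈ F | u ∈ Q} | w ∈ Q} := by
  simp only [coverCount, filter_filter]

lemma coverCount_comm (F : Finset (Finset V)) (u w : V) : coverCount F u w = coverCount F w u := by
  simp only [coverCount, and_comm]

lemma sum_coverCount_le {F : Finset (Finset V)} {u : V} {k d : ℕ} (S : Finset V)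
    (hk : #{Q ∈ F | u ∈ Q} ≤ k) (hS : ∀ Q ∈ F, u ∈ Q → #(S ∩ Q) ≤ d) :
    ∑ w ∈ S, coverCount F u w ≤ k * d := by
  calc ∑ w ∈ S, coverCount F u w = ∑ Q ∈ {Q ∈ F | u ∈ Q}, #(S ∩ Q) := by
        simp_rw [coverCount_eq_card_filter, ← filter_mem_eq_inter, card_eq_sum_ones, sum_filter]
        rw [sum_comm]
        simp only [sum_ite_irrel, sum_const_zero]
    _ ≤ ∑ _Q ∈ {Q ∈ F | u ∈ Q}, d := sum_le_sum fun Q hQ => hS Q (mem_filter.mp hQ).1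
      (mem_filter.mp hQ).2
    _ ≤ k * d := by
        rw [sum_const, smul_eq_mul]
        exact Nat.mul_le_mul_right _ hk

lemma abs_ite_sub_natCast_le (p : Prop) [Decidable p] (m : ℕ) :
    |(if p then 1 else 0 : ℝ) - m| ≤
      ((if p ∧ m = 0 then 1 else 0) + m * (m - 1) + if p then 0 else m : ℕ) := by
  by_cases hp : p
  · rcases m with _ | m
    · simp [hp]
    · simp only [hp, if_true, true_and, Nat.add_one_ne_zero, if_false, add_zero, zero_add]
      push_cast
      rw [abs_of_nonpos (by linarith)]
      nlinarith
  · have : (m : ℝ) ≤ ((m * (m - 1) + m : ℕ) : ℝ) := by exact_mod_cast Nat.le_add_left _ _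
    simpa [hp] using this

variable [Fintype V]

lemma neg_le_matMinEig {A : Matrix V V ℝ} {c : ℝ} (hc : 0 ≤ c)
    (hA : ∀ x, -(c * (x ⬝ᵥ x)) ≤ x ⬝ᵥ A *ᵥ x) : -c ≤ matMinEig A := by
  rcases Set.eq_empty_or_nonempty {μ : ℝ | ∃ x : V → ℝ, x ≠ 0 ∧ A *ᵥ x = μ • x} with h | h
  · rw [matMinEig, h, Real.sInf_empty]
    linarith
  refine le_csInf h ?_
  rintro μ ⟨x, hx, hμ⟩
  have hxx : 0 < x ⬝ᵥ x := lt_of_le_of_ne (sum_nonneg fun i _ => mul_self_nonneg (x i))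
    (Ne.symm (dotProduct_self_eq_zero.not.mpr hx))
  have := hA x
  rw [hμ, dotProduct_smul, smul_eq_mul] at this
  nlinarith

lemma abs_dotProduct_mulVec_le {E : Matrix V V ℝ} (hE : E.IsSymm) {c : ℝ}
    (hrow : ∀ u, ∑ w, |E u w| ≤ c) (x : V → ℝ) : |x ⬝ᵥ E *ᵥ x| ≤ c * (x ⬝ᵥ x) := by
  have hamgm : ∀ a b : ℝ, |a * b| ≤ a ^ 2 / 2 + b ^ 2 / 2 := fun a b => by
    rw [abs_mul]
    nlinarith [sq_nonneg (|a| - |b|), sq_abs a, sq_abs b]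
  calc |x ⬝ᵥ E *ᵥ x| = |∑ u, ∑ w, E u w * (x u * x w)| := by
        simp only [dotProduct, mulVec, mul_sum]
        congr 1
        exact sum_congr rfl fun u _ => sum_congr rfl fun w _ => by ring
    _ ≤ ∑ u, ∑ w, |E u w| * (x u ^ 2 / 2 + x w ^ 2 / 2) := by
        refine (abs_sum_le_sum_abs _ _).trans (sum_le_sum fun u _ => ?_)
        refine (abs_sum_le_sum_abs _ _).trans (sum_le_sum fun w _ => ?_)
        rw [abs_mul]
        exact mul_le_mul_of_nonneg_left (hamgm _ _) (abs_nonneg _)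
    _ = 2 * ∑ u, (∑ w, |E u w|) * (x u ^ 2 / 2) := by
        simp only [mul_add, sum_add_distrib, sum_mul, two_mul]
        congr 1
        rw [sum_comm]
        simp only [← hE.apply]
    _ ≤ 2 * ∑ u, c * (x u ^ 2 / 2) := by
        gcongr with u
        exact hrow u
    _ = c * (x ⬝ᵥ x) := by
        simp only [dotProduct, mul_sum, ← sq]
        exact sum_congr rfl fun u _ => by ring

lemma dotProduct_coverCount_mulVec_nonneg (F : Finset (Finset V)) (x : V → ℝ) :
    0 ≤ x ⬝ᵥ (of fun u w => (coverCount F u w : ℝ)) *ᵥ x := by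
  set y : Finset V → V → ℝ := fun Q u => if u ∈ Q then x u else 0
  have : x ⬝ᵥ (of fun u w => (coverCount F u w : ℝ)) *ᵥ x = ∑ Q ∈ F, (∑ u, y Q u) ^ 2 := by
    simp only [sq, dotProduct, mulVec, of_apply, coverCount, card_filter,
      Nat.cast_sum, mul_sum, sum_mul]
    rw [eq_comm, sum_comm]
    refine sum_congr rfl fun u _ => ?_
    rw [sum_comm]
    refine sum_congr rfl fun w _ => ?_
    refine sum_congr rfl fun Q _ => ?_
    by_cases hu : u ∈ Q <;> by_cases hw : w ∈ Q <;> simp [y, hu, hw, mul_comm]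
  rw [this]
  positivity

lemma neg_le_minEig_of_sum_abs_le (G : SimpleGraph V) (F : Finset (Finset V)) {c : ℝ}
    (hc : 0 ≤ c) (hrow : ∀ u, ∑ w, |adjMat G u w - coverCount F u w| ≤ c) : -c ≤ minEig G := by
  refine neg_le_matMinEig hc fun x => ?_
  set M : Matrix V V ℝ := of fun u w => (coverCount F u w : ℝ)
  have hE : (adjMat G - M).IsSymm := IsSymm.ext fun u w => by
    simp [M, adjMat, G.adj_comm, coverCount_comm F u w]
  have hsplit : x ⬝ᵥ adjMat G *ᵥ x = x ⬝ᵥ M *ᵥ x + x ⬝ᵥ (adjMat G - M) *ᵥ x := by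
    rw [sub_mulVec, dotProduct_sub]
    ring
  have hM := dotProduct_coverCount_mulVec_nonneg F x
  have hrest := abs_dotProduct_mulVec_le hE (c := c) (by simpa [M] using hrow) x
  linarith [neg_abs_le (x ⬝ᵥ (adjMat G - M) *ᵥ x)]

lemma sum_coverCount_mul_pred_le {F : Finset (Finset V)} {u : V} {k p : ℕ}
    (hk : #{Q ∈ F | u ∈ Q} ≤ k) (hp : ∀ Q ∈ F, ∀ Q' ∈ F, Q ≠ Q' → #(Q ∩ Q') ≤ p) :
    ∑ w, coverCount F u w * (coverCount F u w - 1) ≤ k * k * p := by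
  set Fu := {Q ∈ F | u ∈ Q}
  have hm : ∀ w, coverCount F u w * (coverCount F u w - 1) =
      ∑ q ∈ Fu.offDiag, if w ∈ q.1 ∩ q.2 then 1 else 0 := by
    intro w
    rw [← card_filter, Nat.mul_sub_one, coverCount_eq_card_filter, ← offDiag_card]
    congr 1
    ext ⟨Q, Q'⟩
    simp only [Fu, mem_offDiag, mem_filter, mem_inter]
    tauto
  calc ∑ w, coverCount F u w * (coverCount F u w - 1)
      = ∑ q ∈ Fu.offDiag, #(q.1 ∩ q.2) := by
        simp_rw [hm]
        rw [sum_comm]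
        simp only [← card_filter, filter_mem_eq_inter, univ_inter]
    _ ≤ ∑ _q ∈ Fu.offDiag, p := sum_le_sum fun q hq => by
        simp only [Fu, mem_offDiag, mem_filter] at hq
        exact hp _ hq.1.1 _ hq.2.1.1 hq.2.2
    _ ≤ k * k * p := by
        rw [sum_const, smul_eq_mul, offDiag_card]
        gcongr
        exact (Nat.sub_le _ _).trans (Nat.mul_le_mul hk hk)

lemma sum_abs_adjMat_sub_coverCount_le (G : SimpleGraph V) (F : Finset (Finset V)) (u : V) :
    ∑ w, |adjMat G u w - coverCount F u w| ≤
      ((#{w | G.Adj u w ∧ coverCount F u w = 0} +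
        ∑ w, coverCount F u w * (coverCount F u w - 1) +
        ∑ w ∈ {w | ¬ G.Adj u w}, coverCount F u w : ℕ) : ℝ) := by
  refine (sum_le_sum fun w _ => abs_ite_sub_natCast_le (G.Adj u w) (coverCount F u w)).trans ?_
  rw [← Nat.cast_sum, Nat.cast_le, sum_add_distrib, sum_add_distrib, card_filter, sum_filter]
  simp only [ite_not, le_refl]

noncomputable def quasiClique (G : SimpleGraph V) (t : ℕ) (C : Finset V) : Finset V :=
  {v | #(nonNbrs G C v) < t}

lemma mem_quasiClique {C : Finset V} {v : V} :
    v ∈ quasiClique G t C ↔ #(nonNbrs G C v) < t := by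
  simp [quasiClique]

lemma subset_quasiClique (ht : 0 < t) {C : Finset V} (hC : G.IsClique (C : Set V)) :
    C ⊆ quasiClique G t C := fun v hv => by
  have : nonNbrs G C v = ∅ :=
    filter_eq_empty_iff.mpr fun u hu ⟨huv, hvu⟩ => hvu (hC hv hu huv.symm)
  rwa [mem_quasiClique, this, card_empty]

lemma card_nbrs_lt_of_notMem_quasiClique (htilde : IsEmpty (tildeK t ↪g G))
    {C : Finset V} (hC : G.IsClique (C : Set V)) {v : V}
    (hv : v ∉ quasiClique G t C) : #(nbrs G C v) < t := by
  rw [mem_quasiClique, not_lt] at hv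
  by_contra! h
  obtain ⟨A, hAC, hA⟩ := exists_subset_card_eq h
  obtain ⟨B, hBC, hB⟩ := exists_subset_card_eq hv
  refine htilde.false (nonempty_tildeK_embedding hA hB ?_ (fun a ha => (mem_filter.mp (hAC ha)).2)
    (fun b hb => (mem_filter.mp (hBC hb)).2.2) (fun hvB => (mem_filter.mp (hBC hvB)).2.1 rfl)).some
  refine hC.subset (coe_subset.mpr (union_subset ?_ ?_))
  · exact hAC.trans (filter_subset _ _)
  · exact hBC.trans (filter_subset _ _)

lemma card_nonNbrs_quasiClique_lt (hstar : IsEmpty (starG t ↪g G))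
    (htilde : IsEmpty (tildeK t ↪g G)) {C : Finset V} (hC : G.IsClique (C : Set V))
    (hCt : t * (t + 2) < #C) {v : V} (hv : v ∈ quasiClique G t C) :
    #(nonNbrs G (quasiClique G t C) v) < ramseyBound t t := by
  by_contra! h
  have hN : ∀ u ∈ nonNbrs G (quasiClique G t C) v,
      u ∈ quasiClique G t C ∧ u ≠ v ∧ ¬ G.Adj v u := fun u hu => mem_filter.mp hu
  -- A `t`-clique of such non-neighbours, with `t` of its common neighbours with `v` in `C`, spans
  -- `K̃_{2t}`; a `t`-independent set of them, with a common neighbour in `C`, spans `K_{1,t}`.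
  rcases exists_isClique_or_isIndepSet G t t _ h with ⟨T, hTN, hT, hTcl⟩ | ⟨T, hTN, hT, hTind⟩
  · obtain ⟨S, hSC, hS, hSadj⟩ := exists_subset_adj_of_card_nonNbrs_lt (T := insert v T) (k := t)
      (fun u hu => by
        rcases mem_insert.mp hu with rfl | hu
        · exact mem_quasiClique.mp hv
        · exact mem_quasiClique.mp (hN u (hTN hu)).1)
      (by have := card_insert_le v T; nlinarith)
    refine htilde.false (nonempty_tildeK_embedding hS hT ?_
      (fun c hc => hSadj c hc v (mem_insert_self _ _)) (fun u hu => (hN u (hTN hu)).2.2)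
      (fun hvT => (hN v (hTN hvT)).2.1 rfl)).some
    rw [coe_union]
    exact isClique_union (hC.subset (coe_subset.mpr hSC)) hTcl
      fun c hc u hu => (hSadj c hc u (mem_insert_of_mem hu)).symm
  · obtain ⟨S, -, hS, hSadj⟩ := exists_subset_adj_of_card_nonNbrs_lt (T := T) (k := 1)
      (fun u hu => mem_quasiClique.mp (hN u (hTN hu)).1) (by nlinarith)
    obtain ⟨c, hc⟩ := card_pos.mp (hS ▸ Nat.one_pos)
    exact hstar.false (nonempty_starG_embedding hT (fun u hu => (hSadj c hc u hu).symm) hTind).some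

noncomputable def overlapBound (t : ℕ) : ℕ := ramseyBound t (ramseyBound t t + 1) + ramseyBound t t

lemma quasiClique_subset_of_overlapBound_lt (hstar : IsEmpty (starG t ↪g G))
    (htilde : IsEmpty (tildeK t ↪g G)) {C D : Finset V} (hC : G.IsClique (C : Set V))
    (hD : G.IsClique (D : Set V)) (hCt : t * (t + 2) < #C) (hDt : t * (t + 2) < #D)
    (hI : overlapBound t < #(quasiClique G t C ∩ quasiClique G t D)) :
    quasiClique G t C ⊆ quasiClique G t D := by
  intro v hv
  by_contra hvD
  set I := quasiClique G t C ∩ quasiClique G t D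
  have hIC : ∀ u ∈ nbrs G I v, u ∈ quasiClique G t C ∧ u ∈ quasiClique G t D := fun u hu =>
    mem_inter.mp (mem_filter.mp hu).1
  have hnonI : #(nonNbrs G I v) < ramseyBound t t :=
    (card_le_card (nonNbrs_mono inter_subset_left v)).trans_lt
      (card_nonNbrs_quasiClique_lt hstar htilde hC hCt hv)
  have hS : ramseyBound t (ramseyBound t t + 1) ≤ #(nbrs G I v) := by
    have := card_le_card_nbrs_add_card_nonNbrs (G := G) I v
    unfold overlapBound at hI
    omega
  -- A `t`-clique of these neighbours of `v`, with `t` of its common neighbours among the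
  -- non-neighbours of `v` in `D`, spans `K̃_{2t}`.
  rcases exists_isClique_or_isIndepSet G _ _ _ hS with ⟨T, hTS, hT, hTcl⟩ | ⟨J, hJS, hJ, hJind⟩
  · have hnbrD := card_nbrs_lt_of_notMem_quasiClique htilde hD hvD
    obtain ⟨B, hBN, hB, hBadj⟩ := exists_subset_adj_of_card_nonNbrs_lt (T := T) (k := t)
      (C := nonNbrs G D v)
      (fun u hu => (card_le_card (nonNbrs_mono (filter_subset _ _) u)).trans_lt
        (mem_quasiClique.mp (hIC u (hTS hu)).2))
      (by have := card_le_card_nbrs_add_card_nonNbrs (G := G) D v; rw [hT]; nlinarith)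
    have hBD : ∀ b ∈ B, b ∈ D ∧ b ≠ v ∧ ¬ G.Adj v b := fun b hb => mem_filter.mp (hBN hb)
    refine htilde.false (nonempty_tildeK_embedding hT hB ?_
      (fun u hu => (mem_filter.mp (hTS hu)).2) (fun b hb => (hBD b hb).2.2)
      (fun hvB => (hBD v hvB).2.1 rfl)).some
    rw [coe_union]
    exact isClique_union hTcl (hD.subset fun b hb => (hBD b hb).1) fun u hu b hb => hBadj b hb u hu
  · obtain ⟨u, hu⟩ := card_pos.mp (by omega : 0 < #J)
    have hJC : J.erase u ⊆ nonNbrs G (quasiClique G t C) u := fun w hw => by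
      obtain ⟨hwu, hwJ⟩ := mem_erase.mp hw
      exact mem_filter.mpr ⟨(hIC w (hJS hwJ)).1, hwu, fun h => hJind hu hwJ hwu.symm h⟩
    have := card_nonNbrs_quasiClique_lt hstar htilde hC hCt (hIC u (hJS hu)).1
    have := card_le_card hJC
    rw [card_erase_of_mem hu, hJ] at this
    omega

lemma card_inter_quasiClique_le (hstar : IsEmpty (starG t ↪g G))
    (htilde : IsEmpty (tildeK t ↪g G)) {C D : Finset V} (hC : G.IsClique (C : Set V))
    (hD : G.IsClique (D : Set V)) (hCt : t * (t + 2) < #C) (hDt : t * (t + 2) < #D)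
    (hne : quasiClique G t C ≠ quasiClique G t D) :
    #(quasiClique G t C ∩ quasiClique G t D) ≤ overlapBound t := by
  by_contra! h
  refine hne ((quasiClique_subset_of_overlapBound_lt hstar htilde hC hD hCt hDt h).antisymm ?_)
  exact quasiClique_subset_of_overlapBound_lt hstar htilde hD hC hDt hCt (by rwa [inter_comm])

noncomputable def cliqueBound (t : ℕ) : ℕ := t * (t + 2 + overlapBound t) + 1

noncomputable def quasiCliqueFamily (G : SimpleGraph V) (t : ℕ) : Finset (Finset V) :=
  (univ.filter fun C : Finset V => G.IsClique (C : Set V) ∧ cliqueBound t ≤ #C).image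
    (quasiClique G t)

lemma mem_quasiCliqueFamily {Q : Finset V} : Q ∈ quasiCliqueFamily G t ↔
    ∃ C : Finset V, (G.IsClique (C : Set V) ∧ cliqueBound t ≤ #C) ∧ quasiClique G t C = Q := by
  simp [quasiCliqueFamily]

lemma lt_of_cliqueBound_le {n : ℕ} (h : cliqueBound t ≤ n) : t * (t + 2) < n := by
  unfold cliqueBound at h
  nlinarith

lemma card_inter_le_overlapBound (hstar : IsEmpty (starG t ↪g G))
    (htilde : IsEmpty (tildeK t ↪g G)) {Q Q' : Finset V} (hQ : Q ∈ quasiCliqueFamily G t)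
    (hQ' : Q' ∈ quasiCliqueFamily G t) (hne : Q ≠ Q') : #(Q ∩ Q') ≤ overlapBound t := by
  obtain ⟨C, ⟨hC, hCs⟩, rfl⟩ := mem_quasiCliqueFamily.mp hQ
  obtain ⟨D, ⟨hD, hDs⟩, rfl⟩ := mem_quasiCliqueFamily.mp hQ'
  exact card_inter_quasiClique_le hstar htilde hC hD (lt_of_cliqueBound_le hCs)
    (lt_of_cliqueBound_le hDs) hne

lemma card_filter_mem_quasiCliqueFamily_lt (hstar : IsEmpty (starG t ↪g G))
    (htilde : IsEmpty (tildeK t ↪g G)) (ht : 0 < t) (v : V) :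
    #{Q ∈ quasiCliqueFamily G t | v ∈ Q} < t := by
  by_contra! h
  obtain ⟨F, hFsub, hF⟩ := exists_subset_card_eq h
  have hFmem : ∀ Q ∈ F, Q ∈ quasiCliqueFamily G t ∧ v ∈ Q := fun Q hQ => mem_filter.mp (hFsub hQ)
  choose! C hC hCQ using fun Q hQ => mem_quasiCliqueFamily.mp (hFmem Q hQ).1
  have hCsub : ∀ Q ∈ F, C Q ⊆ Q := fun Q hQ => by
    simpa only [hCQ Q hQ] using subset_quasiClique ht (hC Q hQ).1
  -- The private neighbours of `v` in the cliques behind `t` members of the family through `v` are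
  -- disjoint and sparsely joined, so an independent transversal of them spans `K_{1,t}` with `v`.
  set X : Finset V → Finset V := fun Q => privateNbrs G F Q (C Q) v
  have hdisj : (F : Set (Finset V)).PairwiseDisjoint X := fun Q _ Q' hQ' hne =>
    disjoint_left.mpr fun u hu hu' =>
      (mem_privateNbrs.mp hu).2.2 Q' hQ' hne.symm (hCsub Q' hQ' (mem_privateNbrs.mp hu').1)
  have hnbr : ∀ Q ∈ F, ∀ Q' ∈ F, Q ≠ Q' → ∀ z ∈ X Q', #(nbrs G (X Q) z) ≤ t - 1 := by
    intro Q hQ Q' hQ' hne z hz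
    have hzQ : z ∉ quasiClique G t (C Q) := by
      rw [hCQ Q hQ]
      exact (mem_privateNbrs.mp hz).2.2 Q hQ hne
    have := card_nbrs_lt_of_notMem_quasiClique htilde (hC Q hQ).1 hzQ
    have hXC : nbrs G (X Q) z ⊆ nbrs G (C Q) z := nbrs_mono (privateNbrs_subset G F Q (C Q) v) z
    have := card_le_card hXC
    omega
  have hcard : ∀ Q ∈ F, #F * (t - 1) < #(X Q) := by
    intro Q hQ
    have hCv : #(nonNbrs G (C Q) v) < t :=
      mem_quasiClique.mp (by rw [hCQ Q hQ]; exact (hFmem Q hQ).2)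
    have hoverlap : ∑ Q' ∈ F.erase Q, #(Q' ∩ Q) ≤ (t - 1) * overlapBound t := by
      refine (sum_le_card_nsmul _ _ (overlapBound t) fun Q' hQ' => ?_).trans
        (by rw [card_erase_of_mem hQ, hF, smul_eq_mul])
      exact card_inter_le_overlapBound hstar htilde (hFmem Q' (mem_of_mem_erase hQ')).1
        (hFmem Q hQ).1 (ne_of_mem_erase hQ')
    have hCs := (hC Q hQ).2
    have := card_le_card_privateNbrs_add (G := G) F (hCsub Q hQ) v
    unfold cliqueBound at hCs
    rw [hF]
    obtain ⟨s, rfl⟩ : ∃ s, t = s + 1 := ⟨t - 1, by omega⟩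
    simp only [Nat.add_sub_cancel] at hoverlap ⊢
    nlinarith
  obtain ⟨T, hTX, hT, hTind⟩ := exists_isIndepSet_transversal X F hdisj hnbr hcard
  refine hstar.false (nonempty_starG_embedding (c := v) (hT.trans hF) (fun u hu => ?_) hTind).some
  obtain ⟨Q, -, huQ⟩ := mem_biUnion.mp (hTX hu)
  exact (mem_privateNbrs.mp huQ).2.1

lemma card_filter_adj_and_coverCount_eq_zero_lt (hstar : IsEmpty (starG t ↪g G)) (ht : 0 < t)
    (v : V) :
    #{w | G.Adj v w ∧ coverCount (quasiCliqueFamily G t) v w = 0} <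
      ramseyBound (cliqueBound t) t := by
  by_contra! h
  rcases exists_isClique_or_isIndepSet G _ _ _ h with ⟨T, hTS, hT, hTcl⟩ | ⟨T, hTS, hT, hTind⟩
  -- A large clique `T` of such neighbours spans, with `v`, a member of the family containing `v`
  -- and all of `T`.
  · have hvT : ∀ u ∈ T, G.Adj v u ∧ coverCount (quasiCliqueFamily G t) v u = 0 := fun u hu => by
      simpa using hTS hu
    have hcl : G.IsClique (insert v T : Finset V) := by
      rw [coe_insert]
      exact hTcl.insert fun u hu _ => (hvT u hu).1
    have hQ : quasiClique G t (insert v T) ∈ quasiCliqueFamily G t :=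
      mem_quasiCliqueFamily.mpr ⟨_, ⟨hcl, hT ▸ card_le_card (subset_insert _ _)⟩, rfl⟩
    obtain ⟨u, hu⟩ := card_pos.mp (by unfold cliqueBound at hT; omega : 0 < #T)
    have hvu := (hvT u hu).2
    rw [coverCount, card_eq_zero, filter_eq_empty_iff] at hvu
    exact hvu hQ ⟨subset_quasiClique ht hcl (mem_insert_self _ _),
      subset_quasiClique ht hcl (mem_insert_of_mem hu)⟩
  · exact hstar.false (nonempty_starG_embedding hT
      (fun u hu => (by simpa using hTS hu : G.Adj v u ∧ _).1) hTind).some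

noncomputable def hoffmanBound (t : ℕ) : ℕ :=
  ramseyBound (cliqueBound t) t + t * t * overlapBound t + t * ramseyBound t t

lemma sum_abs_adjMat_sub_coverCount_le_hoffmanBound (hstar : IsEmpty (starG t ↪g G))
    (htilde : IsEmpty (tildeK t ↪g G)) (ht : 0 < t) (u : V) :
    ∑ w, |adjMat G u w - coverCount (quasiCliqueFamily G t) u w| ≤ hoffmanBound t := by
  have hFu := (card_filter_mem_quasiCliqueFamily_lt hstar htilde ht u).le
  refine (sum_abs_adjMat_sub_coverCount_le G _ u).trans (Nat.cast_le.mpr ?_)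
  unfold hoffmanBound
  gcongr ?_ + ?_ + ?_
  · exact (card_filter_adj_and_coverCount_eq_zero_lt hstar ht u).le
  · exact sum_coverCount_mul_pred_le hFu fun Q hQ Q' hQ' hne =>
      card_inter_le_overlapBound hstar htilde hQ hQ' hne
  · refine sum_coverCount_le _ hFu fun Q hQ huQ => ?_
    obtain ⟨C, ⟨hC, hCs⟩, rfl⟩ := mem_quasiCliqueFamily.mp hQ
    have hsub : ({w | ¬ G.Adj u w} : Finset V) ∩ quasiClique G t C ⊆
        insert u (nonNbrs G (quasiClique G t C) u) :=
      fun w hw => by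
        by_cases hwu : w = u
        · exact hwu ▸ mem_insert_self _ _
        · simp only [mem_inter, mem_filter, mem_univ, true_and] at hw
          exact mem_insert_of_mem (mem_filter.mpr ⟨hw.2, hwu, hw.1⟩)
    exact (card_le_card hsub).trans <| (card_insert_le _ _).trans
      (card_nonNbrs_quasiClique_lt hstar htilde hC (lt_of_cliqueBound_le hCs) huQ)

end Hoffman

open Hoffman

/-- **Hoffman.** For every integer `t ≥ 3` there is a positive constant `λ(t)` such that
every graph containing neither `K_{1,t}` nor `K̃_{2t}` as an induced subgraph has
smallest eigenvalue at least `-λ(t)`. -/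
theorem stmt10 (t : ℕ) (ht : 3 ≤ t) :
    ∃ lam : ℝ, 0 < lam ∧ ∀ (n : ℕ) (G : SimpleGraph (Fin n)),
      IsEmpty (starG t ↪g G) → IsEmpty (tildeK t ↪g G) →
      -lam ≤ minEig G := by
  have ht0 : 0 < t := by omega
  refine ⟨hoffmanBound t, ?_, fun n G hstar htilde => ?_⟩
  · have := ramseyBound_pos (a := cliqueBound t) (Nat.succ_pos _) ht0
    unfold hoffmanBound
    positivity
  exact neg_le_minEig_of_sum_abs_le G _ (Nat.cast_nonneg _)
    (sum_abs_adjMat_sub_coverCount_le_hoffmanBound hstar htilde ht0)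
end

section
/- Let λ be a positive real number and let G be a finite simple graph of order n ≥ 3 with largest adjacency eigenvalue λ₀(G). If λ₀(G) > λ and for every proper induced subgraph H of G the largest eigenvalue λ₀(H) of H is at most λ, then λ₀(G) ≤ ((n-1)/(n-2))·λ. -/
open scoped Classical

/-- The largest (real) eigenvalue of a matrix. -/
noncomputable def matMaxEig {V : Type*} [Fintype V] (A : Matrix V V ℝ) : ℝ :=
  sSup {μ : ℝ | ∃ v : V → ℝ, v ≠ 0 ∧ A.mulVec v = μ • v}

/-- The largest eigenvalue of a graph. -/
noncomputable def maxEig {V : Type*} [Fintype V] (G : SimpleGraph V) : ℝ :=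
  matMaxEig (adjMat G)

/-!
Let `x` be an eigenvector of `A(G)` for `λ₀ = λ₀(G)`. For each vertex `v`, the restriction of `x`
to `V ∖ {v}` is a test vector for `G - v`; since `A(G)` has zero diagonal, its Rayleigh quotient is
`(λ₀‖x‖² - 2λ₀ x_v²) / (‖x‖² - x_v²)`, so the hypothesis gives `(λ₀ - λ)‖x‖² ≤ (2λ₀ - λ) x_v²`.
Summing over the `n` vertices yields `n (λ₀ - λ) ≤ 2λ₀ - λ`, i.e. `(n - 2) λ₀ ≤ (n - 1) λ`.
-/

open Matrix

namespace Matrix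

section Spectrum

variable {K V : Type*} [Field K] [Fintype V] [DecidableEq V]

theorem setOf_exists_mulVec_eq_smul_eq_spectrum (A : Matrix V V K) :
    {μ : K | ∃ v : V → K, v ≠ 0 ∧ A *ᵥ v = μ • v} = spectrum K A := by
  ext μ
  rw [← spectrum_toLin', ← Module.End.hasEigenvalue_iff_mem_spectrum,
    Module.End.hasEigenvalue_iff, Submodule.ne_bot_iff]
  simp only [Module.End.mem_eigenspace_iff, toLin'_apply, Set.mem_ofPred_eq]
  exact ⟨fun ⟨v, hv, h⟩ => ⟨v, h, hv⟩, fun ⟨v, h, hv⟩ => ⟨v, hv, h⟩⟩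

theorem matMaxEig_eq_sSup_spectrum (A : Matrix V V ℝ) :
    matMaxEig A = sSup (spectrum ℝ A) := by
  rw [matMaxEig, setOf_exists_mulVec_eq_smul_eq_spectrum]

variable {A : Matrix V V ℝ}

theorem IsHermitian.le_matMaxEig (hA : A.IsHermitian) {μ : ℝ} (hμ : μ ∈ spectrum ℝ A) :
    μ ≤ matMaxEig A := by
  rw [matMaxEig_eq_sSup_spectrum]
  refine le_csSup ?_ hμ
  rw [hA.spectrum_real_eq_range_eigenvalues]
  exact (Set.finite_range _).bddAbove

theorem IsHermitian.exists_mulVec_eq_matMaxEig_smul [Nonempty V] (hA : A.IsHermitian) :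
    ∃ v : V → ℝ, v ≠ 0 ∧ A *ᵥ v = matMaxEig A • v := by
  have hmem : matMaxEig A ∈ spectrum ℝ A := by
    rw [matMaxEig_eq_sSup_spectrum, hA.spectrum_real_eq_range_eigenvalues]
    exact (Set.range_nonempty _).csSup_mem (Set.finite_range _)
  rwa [← setOf_exists_mulVec_eq_smul_eq_spectrum] at hmem

theorem IsHermitian.dotProduct_mulVec_le_matMaxEig_mul (hA : A.IsHermitian) (x : V → ℝ) :
    x ⬝ᵥ A *ᵥ x ≤ matMaxEig A * (x ⬝ᵥ x) := by
  have hpsd : (algebraMap ℝ (Matrix V V ℝ) (matMaxEig A) - A).PosSemidef := by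
    refine posSemidef_iff_isHermitian_and_spectrum_nonneg.mpr ⟨?_, ?_⟩
    · rw [Algebra.algebraMap_eq_smul_one]
      exact (isHermitian_one.smul (IsSelfAdjoint.all _)).sub hA
    rw [← spectrum.singleton_sub_eq]
    rintro _ ⟨_, rfl, μ, hμ, rfl⟩
    exact sub_nonneg.mpr (hA.le_matMaxEig hμ)
  have := (posSemidef_iff_dotProduct_mulVec.mp hpsd).2 x
  rw [Algebra.algebraMap_eq_smul_one, star_trivial, sub_mulVec, dotProduct_sub, smul_mulVec,
    one_mulVec, dotProduct_smul, smul_eq_mul] at this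
  linarith

end Spectrum

section Restrict

variable {R V : Type*} [CommRing R] [Fintype V] [DecidableEq V]

theorem dotProduct_restrict_erase (x : V → R) (v : V) :
    (fun i : (Finset.univ.erase v : Set V) => x i) ⬝ᵥ (fun i => x i) = x ⬝ᵥ x - x v ^ 2 := by
  rw [dotProduct, Finset.sum_finset_coe (fun i => x i * x i), Finset.sum_erase_eq_sub
    (Finset.mem_univ v), dotProduct, sq]

theorem IsSymm.dotProduct_submatrix_erase_mulVec {A : Matrix V V R} (hA : A.IsSymm)
    (x : V → R) (v : V) :
    (fun i : (Finset.univ.erase v : Set V) => x i) ⬝ᵥ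
        (A.submatrix (↑) (↑) *ᵥ fun i : (Finset.univ.erase v : Set V) => x i) =
      x ⬝ᵥ A *ᵥ x - 2 * x v * (A *ᵥ x) v + A v v * x v ^ 2 := by
  have hrow (i : V) : ∑ j ∈ Finset.univ.erase v, A i j * x j = (A *ᵥ x) i - A i v * x v := by
    rw [Finset.sum_erase_eq_sub (Finset.mem_univ v)]; rfl
  have hcol : ∑ i, x i * (A i v * x v) = (A *ᵥ x) v * x v := by
    simp only [mulVec, dotProduct, Finset.sum_mul, hA.apply v]
    exact Finset.sum_congr rfl fun i _ => by ring
  have hres : (fun i : (Finset.univ.erase v : Set V) => x i) ⬝ᵥ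
      (A.submatrix (↑) (↑) *ᵥ fun i : (Finset.univ.erase v : Set V) => x i) =
        ∑ i ∈ Finset.univ.erase v, x i * ∑ j ∈ Finset.univ.erase v, A i j * x j := by
    simp only [dotProduct, mulVec, submatrix_apply]
    rw [← Finset.sum_finset_coe (fun i => x i * ∑ j ∈ Finset.univ.erase v, A i j * x j)]
    exact Finset.sum_congr rfl fun i _ =>
      congrArg (x i * ·) (Finset.sum_finset_coe (fun j => A i j * x j) _)
  rw [hres]
  simp only [hrow, mul_sub, Finset.sum_erase_eq_sub (Finset.mem_univ v), Finset.sum_sub_distrib,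
    hcol]
  simp only [mulVec, dotProduct]
  ring

end Restrict

end Matrix

section Graph

variable {V : Type*} [Fintype V] (G : SimpleGraph V)

theorem adjMat_isSymm : (adjMat G).IsSymm := by
  ext i j
  simp only [transpose_apply, adjMat, of_apply, G.adj_comm]

theorem adjMat_isHermitian_s13 : (adjMat G).IsHermitian := by
  rw [IsHermitian, conjTranspose_eq_transpose_of_trivial]
  exact adjMat_isSymm G

@[simp]
theorem adjMat_apply_self (v : V) : adjMat G v v = 0 := by
  simp [adjMat]

theorem adjMat_induce (s : Set V) [Fintype s] :
    adjMat (G.induce s) = (adjMat G).submatrix (↑) (↑) := by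
  ext i j
  simp [adjMat]

variable [DecidableEq V] {G}

theorem sub_mul_dotProduct_self_le_mul_sq {lam μ : ℝ} {x : V → ℝ}
    (hx : adjMat G *ᵥ x = μ • x) (v : V)
    (hv : maxEig (G.induce (Finset.univ.erase v : Set V)) ≤ lam) :
    (μ - lam) * (x ⬝ᵥ x) ≤ (2 * μ - lam) * x v ^ 2 := by
  set y : ↥(Finset.univ.erase v : Set V) → ℝ := fun i => x i
  have hquad : y ⬝ᵥ adjMat (G.induce (Finset.univ.erase v : Set V)) *ᵥ y =
      μ * (x ⬝ᵥ x) - 2 * μ * x v ^ 2 := by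
    rw [adjMat_induce, (adjMat_isSymm G).dotProduct_submatrix_erase_mulVec, hx]
    simp only [dotProduct_smul, smul_eq_mul, Pi.smul_apply, adjMat_apply_self]
    ring
  have hyy : 0 ≤ y ⬝ᵥ y := by simpa using dotProduct_star_self_nonneg y
  have key : μ * (x ⬝ᵥ x) - 2 * μ * x v ^ 2 ≤ lam * (x ⬝ᵥ x - x v ^ 2) := calc
    _ = y ⬝ᵥ adjMat (G.induce (Finset.univ.erase v : Set V)) *ᵥ y := hquad.symm
    _ ≤ maxEig (G.induce (Finset.univ.erase v : Set V)) * (y ⬝ᵥ y) :=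
      (adjMat_isHermitian_s13 _).dotProduct_mulVec_le_matMaxEig_mul y
    _ ≤ lam * (y ⬝ᵥ y) := mul_le_mul_of_nonneg_right hv hyy
    _ = lam * (x ⬝ᵥ x - x v ^ 2) := by rw [dotProduct_restrict_erase]
  linarith

theorem card_sub_two_mul_le_card_sub_one_mul {lam μ : ℝ} {x : V → ℝ} (hx0 : x ≠ 0)
    (hx : adjMat G *ᵥ x = μ • x)
    (hsub : ∀ v : V, maxEig (G.induce (Finset.univ.erase v : Set V)) ≤ lam) :
    ((Fintype.card V : ℝ) - 2) * μ ≤ ((Fintype.card V : ℝ) - 1) * lam := by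
  have hpos : 0 < x ⬝ᵥ x := by simpa using dotProduct_star_self_pos_iff.mpr hx0
  have hsum : (Fintype.card V : ℝ) * ((μ - lam) * (x ⬝ᵥ x)) ≤ (2 * μ - lam) * (x ⬝ᵥ x) := by
    calc (Fintype.card V : ℝ) * ((μ - lam) * (x ⬝ᵥ x))
        = ∑ v, (μ - lam) * (x ⬝ᵥ x) := by simp
      _ ≤ ∑ v, (2 * μ - lam) * x v ^ 2 :=
        Finset.sum_le_sum fun v _ => sub_mul_dotProduct_self_le_mul_sq hx v (hsub v)
      _ = (2 * μ - lam) * (x ⬝ᵥ x) := by simp [← Finset.mul_sum, dotProduct, sq]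
  rw [← mul_assoc] at hsum
  linarith [le_of_mul_le_mul_right hsum hpos]

end Graph

theorem stmt13_general (lam : ℝ) {n : ℕ} (hn : 3 ≤ n)
    (G : SimpleGraph (Fin n))
    (hsub : ∀ s : Finset (Fin n), s ≠ Finset.univ → maxEig (G.induce ↑s) ≤ lam) :
    maxEig G ≤ ((n : ℝ) - 1) / ((n : ℝ) - 2) * lam := by
  have : Nonempty (Fin n) := ⟨⟨0, by omega⟩⟩
  obtain ⟨x, hx0, hx⟩ := (adjMat_isHermitian_s13 G).exists_mulVec_eq_matMaxEig_smul
  have hbound := card_sub_two_mul_le_card_sub_one_mul hx0 hx fun v =>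
    hsub _ (Finset.erase_ssubset (Finset.mem_univ v)).ne
  rw [Fintype.card_fin] at hbound
  have hn2 : (0 : ℝ) < n - 2 := by
    have : (3 : ℝ) ≤ n := by exact_mod_cast hn
    linarith
  rw [div_mul_eq_mul_div, le_div_iff₀ hn2, mul_comm]
  exact hbound

/-- If `G` is a graph on `n ≥ 3` vertices with largest eigenvalue `λ₀(G) > λ` and every
proper induced subgraph has largest eigenvalue at most `λ`, then
`λ₀(G) ≤ (n-1)/(n-2) · λ`. -/
theorem stmt13 (lam : ℝ) (hlam : 0 < lam) {n : ℕ} (hn : 3 ≤ n)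
    (G : SimpleGraph (Fin n))
    (h0 : lam < maxEig G)
    (hsub : ∀ s : Finset (Fin n), s ≠ Finset.univ → maxEig (G.induce ↑s) ≤ lam) :
    maxEig G ≤ ((n : ℝ) - 1) / ((n : ℝ) - 2) * lam :=
  stmt13_general lam hn G hsub
end
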